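/- arXiv:1304.0228 — 7 statements merged into one kernel-verified Lean document; each statement's English description precedes it below -/
import Mathlib

section
/- Every closeness preserving transformation of G is an adjacency preserving transformation: if f : G → G is a bijection such that both f and f⁻¹ map close pairs to close pairs, then both f and f⁻¹ map adjacent pairs to adjacent pairs. -/
open Module

variable (K V : Type*) [DivisionRing K] [AddCommGroup V] [Module K V]

/-- Two subspaces `P`, `T` are adjacent: `dim P = dim T = dim (P ⊓ T) + 1`. -/
def SubAdj (P T : Submodule K V) : Prop :=
  finrank K P = finrank K T ∧ finrank K P = finrank K ↥(P ⊓ T) + 1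

/-- Two subspaces are complementary. -/
def SubCompl (S U : Submodule K V) : Prop := S ⊓ U = ⊥ ∧ S ⊔ U = ⊤

/-- The set 𝒢 of pairs of complementary subspaces of dimensions `k` and `n - k`. -/
def GSet (n k : ℕ) : Set (Submodule K V × Submodule K V) :=
  {p | finrank K p.1 = k ∧ finrank K p.2 = n - k ∧ SubCompl K V p.1 p.2}

/-- Adjacency of pairs. -/
def PairAdj (p q : Submodule K V × Submodule K V) : Prop :=
  (p.1 = q.1 ∧ SubAdj K V p.2 q.2) ∨ (SubAdj K V p.1 q.1 ∧ p.2 = q.2)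

/-- Closeness of pairs. -/
def PairClose (p q : Submodule K V × Submodule K V) : Prop :=
  (p.1 = q.1 ∧ p.2 ≠ q.2) ∨ (p.1 ≠ q.1 ∧ p.2 = q.2)

/-!
Adjacency of close pairs can be read off the closeness graph. For close pairs `p = (S, U₀)` and
`q = (S, U₁)`, the pairs with second entry `U₀` form the maximal clique through `p` avoiding `q`.
Now `U₀ ~ U₁` iff some `W ≠ U₀, U₁` of the same dimension has all its complements complementary
to `U₀` or to `U₁`. If `U₀ ~ U₁`, any hyperplane `W ≠ U₀, U₁` of `U₀ ⊔ U₁` through `U₀ ⊓ U₁`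
will do: a complement of `W` meets `U₀ ⊔ U₁` in at most a line, and that line cannot lie in both
`U₀` and `U₁`. Otherwise `dim (U₀ ⊔ U₁) ≥ dim W + 2`, so some complement of `W` contains nonzero
vectors of both `U₀` and `U₁`. Through these cliques the condition becomes a first-order property
of the closeness graph, hence invariant under closeness preserving bijections; swapping the two
entries of the pairs handles close pairs with a common second entry.
-/

open Submodule Function

section Subspaces

variable {K V} {U₀ U₁ W S : Submodule K V}

theorem disjoint_span_sup_span_of_notMem {x y : V} (hx : x ∉ W) (hy : y ∉ W ⊔ K ∙ x) :
    Disjoint (K ∙ y ⊔ K ∙ x) W := by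
  have hx0 : x ≠ 0 := fun h => hx (h ▸ W.zero_mem)
  have hy0 : y ≠ 0 := fun h => hy (h ▸ zero_mem _)
  rw [sup_comm] at hy
  exact Disjoint.disjoint_sup_left_of_disjoint_sup_right
    ((disjoint_span_singleton' hx0).2 hx).symm ((disjoint_span_singleton' hy0).2 hy).symm

variable [FiniteDimensional K V]

theorem disjoint_or_disjoint_of_inf_le_of_le_sup (hD : U₀ ⊓ U₁ ≤ W) (hW : W ≤ U₀ ⊔ U₁)
    (hdim : finrank K ↥(U₀ ⊔ U₁) ≤ finrank K W + 1) (hS : Disjoint S W) :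
    Disjoint S U₀ ∨ Disjoint S U₁ := by
  set P := S ⊓ (U₀ ⊔ U₁)
  have hP : finrank K P ≤ 1 := by
    have hPW : P ⊓ W = ⊥ := (hS.mono_left inf_le_left).eq_bot
    have hsum := finrank_sup_add_finrank_inf_eq P W
    have hle : finrank K ↥(P ⊔ W) ≤ finrank K ↥(U₀ ⊔ U₁) := finrank_mono (sup_le inf_le_right hW)
    rw [hPW, finrank_bot] at hsum
    omega
  have eq_P : ∀ U ≤ U₀ ⊔ U₁, ¬Disjoint S U → S ⊓ U = P := fun U hU hSU =>
    eq_of_le_of_finrank_le (inf_le_inf_left S hU) <| by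
      have : finrank K ↥(S ⊓ U) ≠ 0 := fun h => hSU (disjoint_iff.2 (finrank_eq_zero.1 h))
      omega
  by_contra! h
  have hPW : P ≤ S ⊓ W := by
    refine le_inf inf_le_left (le_trans (le_inf ?_ ?_) hD)
    · exact (eq_P U₀ le_sup_left h.1).ge.trans inf_le_right
    · exact (eq_P U₁ le_sup_right h.2).ge.trans inf_le_right
  rw [hS.eq_bot, le_bot_iff, ← eq_P U₀ le_sup_left h.1] at hPW
  exact h.1 (disjoint_iff.2 hPW)

theorem exists_between_inf_sup_ne_ne (h : finrank K ↥(U₀ ⊓ U₁) + 1 = finrank K U₀)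
    (hdim : finrank K U₀ = finrank K U₁) :
    ∃ W : Submodule K V, U₀ ⊓ U₁ ≤ W ∧ W ≤ U₀ ⊔ U₁ ∧ finrank K W = finrank K U₀ ∧
      W ≠ U₀ ∧ W ≠ U₁ := by
  have lt_of_finrank_lt {U : Submodule K V} (hU : U₀ ⊓ U₁ ≤ U)
      (hlt : finrank K ↥(U₀ ⊓ U₁) < finrank K U) : U₀ ⊓ U₁ < U :=
    lt_of_le_of_ne hU (by rintro rfl; omega)
  obtain ⟨x, hx, hxD⟩ := SetLike.exists_of_lt (lt_of_finrank_lt inf_le_left (by omega))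
  obtain ⟨y, hy, hyD⟩ := SetLike.exists_of_lt (lt_of_finrank_lt inf_le_right (by omega))
  have hxy₀ : x + y ∉ U₀ := fun h => hyD ⟨(U₀.add_mem_iff_right hx).1 h, hy⟩
  have hxy₁ : x + y ∉ U₁ := fun h => hxD ⟨hx, (U₁.add_mem_iff_left hy).1 h⟩
  have hxyW : x + y ∈ U₀ ⊓ U₁ ⊔ K ∙ (x + y) := mem_sup_right (mem_span_singleton_self _)
  refine ⟨U₀ ⊓ U₁ ⊔ K ∙ (x + y), le_sup_left, ?_, ?_, ?_, ?_⟩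
  · exact sup_le (inf_le_left.trans le_sup_left)
      ((span_singleton_le_iff_mem _ _).2 (add_mem (mem_sup_left hx) (mem_sup_right hy)))
  · rw [finrank_sup_span_singleton fun h => hxy₀ (mem_inf.1 h).1, h]
  · rintro hW; exact hxy₀ (hW ▸ hxyW)
  · rintro hW; exact hxy₁ (hW ▸ hxyW)

theorem exists_disjoint_not_disjoint_not_disjoint (h₀ : ¬U₀ ≤ W) (h₁ : ¬U₁ ≤ W)
    (hdim : finrank K W + 2 ≤ finrank K ↥(U₀ ⊔ U₁)) :
    ∃ P : Submodule K V, Disjoint P W ∧ ¬Disjoint P U₀ ∧ ¬Disjoint P U₁ := by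
  have not_disjoint {x : V} {U : Submodule K V} (hxU : x ∈ U) (hxW : x ∉ W) (P : Submodule K V)
      (hxP : x ∈ P) : ¬Disjoint P U := fun hPU =>
    hxW (((disjoint_def.1 hPU) x hxP hxU) ▸ W.zero_mem)
  obtain ⟨x, hx, hxW⟩ := SetLike.not_le_iff_exists.1 h₀
  by_cases hU₁ : U₁ ≤ W ⊔ K ∙ x
  · obtain ⟨y, hy, hyW⟩ := SetLike.not_le_iff_exists.1 h₁
    have hU₀ : ¬U₀ ≤ W ⊔ K ∙ x := fun hU₀ => by
      have := finrank_mono (sup_le hU₀ hU₁)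
      rw [finrank_sup_span_singleton hxW] at this
      omega
    obtain ⟨x', hx', hx'W⟩ := SetLike.not_le_iff_exists.1 hU₀
    have hx'y : x' ∉ W ⊔ K ∙ y := fun h =>
      hx'W (sup_le le_sup_left ((span_singleton_le_iff_mem _ _).2 (hU₁ hy)) h)
    refine ⟨K ∙ x' ⊔ K ∙ y, disjoint_span_sup_span_of_notMem hyW hx'y, ?_, ?_⟩
    · exact not_disjoint hx' (fun h => hx'y (mem_sup_left h)) _
        (mem_sup_left (mem_span_singleton_self _))
    · exact not_disjoint hy hyW _ (mem_sup_right (mem_span_singleton_self _))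
  · obtain ⟨y, hy, hyW⟩ := SetLike.not_le_iff_exists.1 hU₁
    refine ⟨K ∙ y ⊔ K ∙ x, disjoint_span_sup_span_of_notMem hxW hyW, ?_, ?_⟩
    · exact not_disjoint hx hxW _ (mem_sup_right (mem_span_singleton_self _))
    · exact not_disjoint hy (fun h => hyW (mem_sup_left h)) _
        (mem_sup_left (mem_span_singleton_self _))

theorem subAdj_iff_exists_forall_isCompl (hne : U₀ ≠ U₁)
    (hdim : finrank K U₀ = finrank K U₁) :
    SubAdj K V U₀ U₁ ↔ ∃ W : Submodule K V, finrank K W = finrank K U₀ ∧ W ≠ U₀ ∧ W ≠ U₁ ∧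
      ∀ S, IsCompl S W → IsCompl S U₀ ∨ IsCompl S U₁ := by
  have hsum := finrank_sup_add_finrank_inf_eq U₀ U₁
  constructor
  · rintro ⟨-, hadj⟩
    obtain ⟨W, hDW, hWU, hW, hW₀, hW₁⟩ := exists_between_inf_sup_ne_ne hadj.symm hdim
    refine ⟨W, hW, hW₀, hW₁, fun S hS => ?_⟩
    have isCompl_of_disjoint {U : Submodule K V} (hU : finrank K U = finrank K W) :
        Disjoint S U → IsCompl S U :=
      (isCompl_iff_disjoint S U (by rw [← finrank_add_eq_of_isCompl hS, hU])).2
    exact (disjoint_or_disjoint_of_inf_le_of_le_sup hDW hWU (by omega) hS.disjoint).imp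
      (isCompl_of_disjoint (by rw [hW])) (isCompl_of_disjoint (by rw [hW, hdim]))
  · rintro ⟨W, hW, hW₀, hW₁, H⟩
    refine ⟨hdim, ?_⟩
    by_contra hna
    have hlt : finrank K ↥(U₀ ⊓ U₁) < finrank K U₀ :=
      finrank_lt_finrank_of_lt (inf_le_left.lt_of_ne fun h =>
        hne (eq_of_le_of_finrank_eq (inf_eq_left.1 h) hdim))
    have not_le {U : Submodule K V} (hU : finrank K U = finrank K W) (hWU : W ≠ U) : ¬U ≤ W :=
      fun h => hWU (eq_of_le_of_finrank_eq h hU).symm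
    obtain ⟨P, hPW, hP₀, hP₁⟩ := exists_disjoint_not_disjoint_not_disjoint
      (not_le hW.symm hW₀) (not_le (by rw [hW, hdim]) hW₁) (by omega)
    obtain ⟨S, hPS, hS⟩ := hPW.exists_isCompl
    rcases H S hS with h | h
    exacts [hP₀ (h.disjoint.mono_left hPS), hP₁ (h.disjoint.mono_left hPS)]

end Subspaces

section CloseGraph

variable {X : Type*} (r : X → X → Prop)

/-- For the closeness relation of `𝒢` and close `p`, `q`, the points `t` with
`CloseLine r p q t` form the maximal clique through `p` that avoids `q`. -/
def CloseLine (p q t : X) : Prop := t = p ∨ (r t p ∧ ¬r t q ∧ t ≠ q)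

/-- For `p = (S, U₀)` and `q = (S, U₁)` in `𝒢`, with witness `w = (T, W)`, this says that every
complement of `W` is a complement of `U₀` or of `U₁`; this happens exactly when `U₀ ~ U₁`. -/
def CloseAdj (p q : X) : Prop :=
  ∃ w, ¬CloseLine r p q w ∧ ¬CloseLine r q p w ∧ ∀ s, (s = w ∨ r s w) →
    (∃ t, CloseLine r p q t ∧ (t = s ∨ r t s)) ∨ (∃ t, CloseLine r q p t ∧ (t = s ∨ r t s))

variable {r}

theorem closeLine_onFun_iff {Y : Type*} {r' : Y → Y → Prop} {f : X → Y} (hf : Injective f)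
    (p q t : X) : CloseLine (r' on f) p q t ↔ CloseLine r' (f p) (f q) (f t) := by
  simp only [CloseLine, onFun, ne_eq, hf.eq_iff]

theorem closeAdj_iff_of_bijective {Y : Type*} {r' : Y → Y → Prop} {f : X → Y} (hf : Bijective f)
    (hr : ∀ a b, r a b ↔ r' (f a) (f b)) (p q : X) :
    CloseAdj r p q ↔ CloseAdj r' (f p) (f q) := by
  simp only [CloseAdj, CloseLine, ne_eq, hf.surjective.exists, hf.surjective.forall, ← hr,
    hf.injective.eq_iff]

end CloseGraph

section Pairs

variable {K V} {p q : Submodule K V × Submodule K V}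

theorem subAdj_irrefl (U : Submodule K V) : ¬SubAdj K V U U := fun h => by
  have h₂ := h.2
  rw [inf_idem] at h₂
  omega

theorem pairClose_of_pairAdj (h : PairAdj K V p q) : PairClose K V p q :=
  h.imp (fun h => ⟨h.1, fun e => subAdj_irrefl _ (e ▸ h.2)⟩)
    (fun h => ⟨fun e => subAdj_irrefl _ (e ▸ h.1), h.2⟩)

theorem pairAdj_iff_of_fst_eq (h : p.1 = q.1) : PairAdj K V p q ↔ SubAdj K V p.2 q.2 := by
  simp only [PairAdj, h, true_and, subAdj_irrefl, false_and, or_false]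

theorem pairAdj_swap : PairAdj K V p.swap q.swap ↔ PairAdj K V p q := by
  simp only [PairAdj, Prod.fst_swap, Prod.snd_swap, or_comm, and_comm]

theorem pairClose_swap : PairClose K V p.swap q.swap ↔ PairClose K V p q := by
  simp only [PairClose, Prod.fst_swap, Prod.snd_swap, or_comm, and_comm]

theorem closeLine_pairClose_iff (h₁ : p.1 = q.1) (h₂ : p.2 ≠ q.2)
    (t : Submodule K V × Submodule K V) : CloseLine (PairClose K V) p q t ↔ t.2 = p.2 := by
  obtain ⟨S, U₀⟩ := p
  obtain ⟨S', U₁⟩ := q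
  obtain ⟨T, U⟩ := t
  dsimp only at h₁ h₂ ⊢
  subst h₁
  simp only [CloseLine, PairClose, Prod.mk.injEq]
  grind

end Pairs

section Complementary

variable {K V} {n k : ℕ} {p : Submodule K V × Submodule K V}

theorem isCompl_of_mem_gSet (hp : p ∈ GSet K V n k) : IsCompl p.1 p.2 :=
  isCompl_iff.2 ⟨disjoint_iff.2 hp.2.2.1, codisjoint_iff.2 hp.2.2.2⟩

theorem swap_mem_gSet (hk : k ≤ n) (hp : p ∈ GSet K V n k) : p.swap ∈ GSet K V n (n - k) :=
  ⟨hp.2.1, by rw [Prod.snd_swap, hp.1]; omega,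
    inf_comm p.1 p.2 ▸ hp.2.2.1, sup_comm p.1 p.2 ▸ hp.2.2.2⟩

theorem bijective_gSet_swap (hk : k ≤ n) :
    Bijective fun p : GSet K V n k => (⟨p.1.swap, swap_mem_gSet hk p.2⟩ : GSet K V n (n - k)) := by
  refine ⟨fun p q h => Subtype.ext (Prod.swap_injective (congrArg Subtype.val h)), fun q => ?_⟩
  have hq : q.1.swap ∈ GSet K V n k := by
    simpa only [Prod.swap_swap, Nat.sub_sub_self hk] using swap_mem_gSet (Nat.sub_le n k) q.2
  exact ⟨⟨q.1.swap, hq⟩, Subtype.ext q.1.swap_swap⟩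

variable [FiniteDimensional K V]

theorem le_of_mem_gSet (hV : finrank K V = n) (hp : p ∈ GSet K V n k) : k ≤ n :=
  hp.1 ▸ hV ▸ finrank_le p.1

theorem mk_mem_gSet (hV : finrank K V = n) (hk : k ≤ n) {S U : Submodule K V}
    (hU : finrank K U = n - k) (h : IsCompl S U) : (S, U) ∈ GSet K V n k := by
  have := finrank_add_eq_of_isCompl h
  exact ⟨show finrank K S = k by omega, hU, h.inf_eq_bot, h.sup_eq_top⟩

end Complementary

section Characterization

variable {K V} [FiniteDimensional K V] {n k : ℕ}

theorem exists_snd_eq_and_eq_or_pairClose_iff (hV : finrank K V = n) {U : Submodule K V}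
    (hU : finrank K U = n - k) (s : GSet K V n k) :
    (∃ t : GSet K V n k, t.1.2 = U ∧ (t = s ∨ PairClose K V t.1 s.1)) ↔ IsCompl s.1.1 U := by
  constructor
  · rintro ⟨t, rfl, rfl | ⟨h, -⟩ | ⟨-, h⟩⟩
    · exact isCompl_of_mem_gSet t.2
    · exact h ▸ isCompl_of_mem_gSet t.2
    · exact h ▸ isCompl_of_mem_gSet s.2
  · intro h
    refine ⟨⟨(s.1.1, U), mk_mem_gSet hV (le_of_mem_gSet hV s.2) hU h⟩, rfl, ?_⟩
    by_cases hUs : U = s.1.2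
    · exact Or.inl (Subtype.ext (Prod.ext rfl hUs))
    · exact Or.inr (Or.inl ⟨rfl, hUs⟩)

theorem forall_eq_or_pairClose_imp_iff (hV : finrank K V = n) (w : GSet K V n k)
    (P : Submodule K V → Prop) :
    (∀ s : GSet K V n k, (s = w ∨ PairClose K V s.1 w.1) → P s.1.1) ↔
      ∀ S, IsCompl S w.1.2 → P S := by
  constructor
  · intro H S hS
    by_cases hSw : S = w.1.1
    · exact hSw ▸ H w (Or.inl rfl)
    · exact H ⟨(S, w.1.2), mk_mem_gSet hV (le_of_mem_gSet hV w.2) w.2.2.1 hS⟩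
        (Or.inr (Or.inr ⟨hSw, rfl⟩))
  · rintro H s (rfl | ⟨h, -⟩ | ⟨-, h⟩)
    · exact H _ (isCompl_of_mem_gSet s.2)
    · exact h ▸ H _ (isCompl_of_mem_gSet w.2)
    · exact H _ (h ▸ isCompl_of_mem_gSet s.2)

theorem pairAdj_iff_closeAdj_of_fst_eq (hV : finrank K V = n) {p q : GSet K V n k}
    (h₁ : p.1.1 = q.1.1) (h₂ : p.1.2 ≠ q.1.2) :
    PairAdj K V p.1 q.1 ↔ CloseAdj (PairClose K V on Subtype.val) p q := by
  have hk := le_of_mem_gSet hV p.2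
  rw [pairAdj_iff_of_fst_eq h₁, subAdj_iff_exists_forall_isCompl h₂ (p.2.2.1.trans q.2.2.1.symm),
    p.2.2.1, CloseAdj]
  simp only [closeLine_onFun_iff Subtype.val_injective, closeLine_pairClose_iff h₁ h₂,
    closeLine_pairClose_iff h₁.symm h₂.symm, onFun,
    exists_snd_eq_and_eq_or_pairClose_iff hV p.2.2.1,
    exists_snd_eq_and_eq_or_pairClose_iff hV q.2.2.1]
  have star_iff (w : GSet K V n k) :=
    forall_eq_or_pairClose_imp_iff hV w fun S => IsCompl S p.1.2 ∨ IsCompl S q.1.2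
  constructor
  · rintro ⟨W, hW, hW₀, hW₁, H⟩
    obtain ⟨T, hT⟩ := Submodule.exists_isCompl W
    exact ⟨⟨(T, W), mk_mem_gSet hV hk hW hT.symm⟩, hW₀, hW₁, (star_iff _).2 H⟩
  · rintro ⟨w, hw₀, hw₁, H⟩
    exact ⟨w.1.2, w.2.2.1, hw₀, hw₁, (star_iff w).1 H⟩

theorem pairAdj_iff_closeAdj_of_snd_eq (hV : finrank K V = n) {p q : GSet K V n k}
    (h₁ : p.1.1 ≠ q.1.1) (h₂ : p.1.2 = q.1.2) :
    PairAdj K V p.1 q.1 ↔ CloseAdj (PairClose K V on Subtype.val) p q := by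
  have hk := le_of_mem_gSet hV p.2
  rw [← pairAdj_swap, closeAdj_iff_of_bijective (r' := PairClose K V on Subtype.val)
    (bijective_gSet_swap hk) fun a b => pairClose_swap.symm]
  exact pairAdj_iff_closeAdj_of_fst_eq (p := ⟨p.1.swap, _⟩) (q := ⟨q.1.swap, _⟩) hV h₂ h₁

theorem pairAdj_iff_pairClose_and_closeAdj (hV : finrank K V = n) (p q : GSet K V n k) :
    PairAdj K V p.1 q.1 ↔ PairClose K V p.1 q.1 ∧ CloseAdj (PairClose K V on Subtype.val) p q := by
  constructor
  · intro h
    refine ⟨pairClose_of_pairAdj h, ?_⟩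
    rcases pairClose_of_pairAdj h with ⟨h₁, h₂⟩ | ⟨h₁, h₂⟩
    exacts [(pairAdj_iff_closeAdj_of_fst_eq hV h₁ h₂).1 h,
      (pairAdj_iff_closeAdj_of_snd_eq hV h₁ h₂).1 h]
  · rintro ⟨⟨h₁, h₂⟩ | ⟨h₁, h₂⟩, h⟩
    exacts [(pairAdj_iff_closeAdj_of_fst_eq hV h₁ h₂).2 h,
      (pairAdj_iff_closeAdj_of_snd_eq hV h₁ h₂).2 h]

end Characterization

theorem closeness_preserving_is_adjacency_preserving_general
    {K V : Type*} [DivisionRing K] [AddCommGroup V] [Module K V]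
    [FiniteDimensional K V] {n k : ℕ} (hV : finrank K V = n)
    (f : GSet K V n k → GSet K V n k) (hf : Function.Bijective f)
    (hclose : ∀ p q : GSet K V n k,
      PairClose K V p.val q.val ↔ PairClose K V (f p).val (f q).val) :
    ∀ p q : GSet K V n k,
      PairAdj K V p.val q.val ↔ PairAdj K V (f p).val (f q).val := by
  intro p q
  rw [pairAdj_iff_pairClose_and_closeAdj hV, pairAdj_iff_pairClose_and_closeAdj hV, hclose,
    closeAdj_iff_of_bijective (r' := PairClose K V on Subtype.val) hf hclose]

/-- Every closeness preserving transformation of 𝒢 is an adjacency preserving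
transformation. -/
theorem closeness_preserving_is_adjacency_preserving
    {K V : Type*} [DivisionRing K] [AddCommGroup V] [Module K V]
    [FiniteDimensional K V] {n k : ℕ} (hn : 2 ≤ n) (hV : finrank K V = n)
    (hk1 : 1 ≤ k) (hk2 : k ≤ n - 1)
    (f : GSet K V n k → GSet K V n k) (hf : Function.Bijective f)
    (hclose : ∀ p q : GSet K V n k,
      PairClose K V p.val q.val ↔ PairClose K V (f p).val (f q).val) :
    ∀ p q : GSet K V n k,
      PairAdj K V p.val q.val ↔ PairAdj K V (f p).val (f q).val :=
  closeness_preserving_is_adjacency_preserving_general hV f hf hclose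
end

section
/- Suppose n = 2 and k = 1, so G is the set of pairs (S,U) of distinct 1-dimensional subspaces of V. Every closeness preserving transformation f of G is of one of the forms f(S,U) = (h(S), h(U)) for all (S,U) ∈ G, or f(S,U) = (h(U), h(S)) for all (S,U) ∈ G, where h is a bijection of the set G_1 of 1-dimensional subspaces of V onto itself. -/
open Module

variable (K V : Type*) [DivisionRing K] [AddCommGroup V] [Module K V]

/-! Two distinct lines of a plane are complementary, so `GSet K V 2 1` is the set of pairs of
distinct points of the projective line, and closeness means agreeing in exactly one coordinate.
For close steps `p, q` and `q, r`, both steps move the same coordinate iff `p, r` are close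
again; as `f` preserves closeness, whether `f` keeps the moving coordinate of a step is the
same for neighbouring steps, hence (the closeness graph being connected, since there are at
least three lines) for all steps. After composing with `(S, U) ↦ (U, S)` if necessary, `f`
therefore preserves equality of first and of second coordinates, so it is induced by a
bijection of the lines. -/

open Function

def ProdClose {α β : Type*} (x y : α × β) : Prop :=
  (x.1 = y.1 ∧ x.2 ≠ y.2) ∨ (x.1 ≠ y.1 ∧ x.2 = y.2)

namespace ProdClose

variable {α β : Type*} {x y z : α × β}

lemma symm (h : ProdClose x y) : ProdClose y x := by
  unfold ProdClose at *; tauto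

lemma swap_iff : ProdClose x.swap y.swap ↔ ProdClose x y := by
  unfold ProdClose; simp only [Prod.fst_swap, Prod.snd_swap]; tauto

lemma of_ne_of_eq_or_eq (hxy : x ≠ y) (h : x.1 = y.1 ∨ x.2 = y.2) : ProdClose x y := by
  unfold ProdClose; rw [Ne, Prod.ext_iff] at hxy; tauto

lemma snd_eq_iff (h : ProdClose x y) : x.2 = y.2 ↔ x.1 ≠ y.1 := by
  unfold ProdClose at h; tauto

lemma iff_fst_eq_iff (hxy : ProdClose x y) (hyz : ProdClose y z) (hxz : x ≠ z) :
    ProdClose x z ↔ (x.1 = y.1 ↔ y.1 = z.1) := by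
  unfold ProdClose at *; rw [Ne, Prod.ext_iff] at hxz
  grind

end ProdClose

abbrev OffDiag (L : Type*) := {p : L × L // p.1 ≠ p.2}

namespace OffDiag

variable {L : Type*}

def swap (p : OffDiag L) : OffDiag L := ⟨p.1.swap, p.2.symm⟩

lemma swap_involutive : Involutive (swap : OffDiag L → OffDiag L) := fun _ => rfl

lemma apply_eq_apply_of_close {β : Type*} (h3 : ∀ a b : L, ∃ c, c ≠ a ∧ c ≠ b)
    {φ : OffDiag L → β} (hφ : ∀ p q, ProdClose p.1 q.1 → φ p = φ q) (p q : OffDiag L) :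
    φ p = φ q := by
  have step : ∀ p q : OffDiag L, p.1.1 = q.1.1 ∨ p.1.2 = q.1.2 → φ p = φ q := by
    intro p q h
    rcases eq_or_ne p q with rfl | hpq
    · rfl
    · exact hφ p q (.of_ne_of_eq_or_eq (Subtype.coe_ne_coe.2 hpq) h)
  obtain ⟨c, hcp, hcq⟩ := h3 p.1.1 q.1.1
  calc φ p = φ ⟨(p.1.1, c), hcp.symm⟩ := step _ _ (.inl rfl)
    _ = φ ⟨(q.1.1, c), hcq.symm⟩ := step _ _ (.inr rfl)
    _ = φ q := step _ _ (.inl rfl)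

variable (f : OffDiag L → OffDiag L)

def KeepsFstEq (p q : OffDiag L) : Prop := (p.1.1 = q.1.1 ↔ (f p).1.1 = (f q).1.1)

variable {f}

lemma keepsFstEq_comm {p q : OffDiag L} : KeepsFstEq f p q ↔ KeepsFstEq f q p := by
  simp only [KeepsFstEq, eq_comm]

variable (hclose : ∀ p q, ProdClose p.1 q.1 ↔ ProdClose (f p).1 (f q).1)
include hclose

lemma keepsFstEq_iff_of_close (hinj : Injective f) {p q r : OffDiag L}
    (hpq : ProdClose p.1 q.1) (hqr : ProdClose q.1 r.1) :
    KeepsFstEq f p q ↔ KeepsFstEq f q r := by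
  rcases eq_or_ne p r with rfl | hpr
  · exact keepsFstEq_comm
  have hpr' := ProdClose.iff_fst_eq_iff hpq hqr (Subtype.coe_ne_coe.2 hpr)
  have hfpr' := ProdClose.iff_fst_eq_iff ((hclose p q).1 hpq) ((hclose q r).1 hqr)
    (Subtype.coe_ne_coe.2 (hinj.ne hpr))
  have := hclose p r
  unfold KeepsFstEq
  tauto

lemma keepsFstEq_iff_keepsFstEq (h3 : ∀ a b : L, ∃ c, c ≠ a ∧ c ≠ b) (hinj : Injective f)
    {p q r s : OffDiag L} (hpq : ProdClose p.1 q.1) (hrs : ProdClose r.1 s.1) :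
    KeepsFstEq f p q ↔ KeepsFstEq f r s := by
  -- `D p` is the common value of `KeepsFstEq f p q` over the neighbours `q` of `p`.
  let D p := ∃ q, ProdClose p.1 q.1 ∧ KeepsFstEq f p q
  have hD : ∀ {p q}, ProdClose p.1 q.1 → (D p ↔ KeepsFstEq f p q) := fun hpq =>
    ⟨fun ⟨_, hpq', h⟩ => (keepsFstEq_comm.trans
      (keepsFstEq_iff_of_close hclose hinj hpq'.symm hpq)).1 h, fun h => ⟨_, hpq, h⟩⟩
  have hDconst : D p = D r := apply_eq_apply_of_close h3 (fun p q hpq => propext <|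
    (hD hpq).trans (keepsFstEq_comm.trans (hD hpq.symm).symm)) p r
  rw [← hD hpq, ← hD hrs, hDconst]

lemma exists_bijective_of_keepsFstEq (h3 : ∀ a b : L, ∃ c, c ≠ a ∧ c ≠ b) (hf : Bijective f)
    (hkeep : ∀ p q, ProdClose p.1 q.1 → KeepsFstEq f p q) :
    ∃ h : L → L, Bijective h ∧ ∀ p, (f p).1 = (h p.1.1, h p.1.2) := by
  have fst_eq_iff : ∀ p q, p.1.1 = q.1.1 ↔ (f p).1.1 = (f q).1.1 := by
    intro p q
    rcases eq_or_ne p q with rfl | hpq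
    · exact iff_of_true rfl rfl
    have hclose_of : p.1.1 = q.1.1 ∨ (f p).1.1 = (f q).1.1 → ProdClose p.1 q.1 :=
      Or.rec (fun h => .of_ne_of_eq_or_eq (Subtype.coe_ne_coe.2 hpq) (.inl h)) fun h =>
        (hclose p q).2 (.of_ne_of_eq_or_eq (Subtype.coe_ne_coe.2 (hf.1.ne hpq)) (.inl h))
    exact ⟨fun h => (hkeep p q (hclose_of (.inl h))).1 h,
      fun h => (hkeep p q (hclose_of (.inr h))).2 h⟩
  have snd_eq : ∀ p q, p.1.2 = q.1.2 → (f p).1.2 = (f q).1.2 := by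
    intro p q h
    rcases eq_or_ne p q with rfl | hpq
    · rfl
    have hpq' : ProdClose p.1 q.1 := .of_ne_of_eq_or_eq (Subtype.coe_ne_coe.2 hpq) (.inr h)
    exact (ProdClose.snd_eq_iff ((hclose p q).1 hpq')).2
      (mt (fst_eq_iff p q).2 ((ProdClose.snd_eq_iff hpq').1 h))
  have exists_fst : ∀ a : L, ∃ p : OffDiag L, p.1.1 = a := fun a =>
    let ⟨c, hc, _⟩ := h3 a a; ⟨⟨(a, c), hc.symm⟩, rfl⟩
  have exists_snd : ∀ a : L, ∃ p : OffDiag L, p.1.2 = a := fun a =>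
    let ⟨c, hc, _⟩ := h3 a a; ⟨⟨(c, a), hc⟩, rfl⟩
  choose row hrow using exists_fst
  choose col hcol using exists_snd
  set h : L → L := fun a => (f (row a)).1.1
  have hfst : ∀ p, (f p).1.1 = h p.1.1 := fun p => (fst_eq_iff _ _).1 (hrow _).symm
  have hsnd : ∀ p, (f p).1.2 = (f (col p.1.2)).1.2 := fun p => snd_eq _ _ (hcol _).symm
  have hinj : Injective h := fun a b hab => by
    rw [← hrow a, ← hrow b]; exact (fst_eq_iff _ _).2 hab
  have hsurj : Surjective h := fun a => by
    obtain ⟨p, hp⟩ := hf.2 (row a)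
    exact ⟨p.1.1, by rw [← hfst, hp, hrow]⟩
  -- `f p` lies off the diagonal, so the `snd`-coordinate of `f (col b)` can only be `h b`.
  have hcol_eq : ∀ b, (f (col b)).1.2 = h b := by
    intro b
    obtain ⟨a, ha⟩ := hsurj (f (col b)).1.2
    rcases eq_or_ne a b with rfl | hab
    · exact ha.symm
    · have hoff := (f ⟨(a, b), hab⟩).2
      rw [hfst, hsnd] at hoff
      exact absurd ha hoff
  exact ⟨h, ⟨hinj, hsurj⟩, fun p => Prod.ext (hfst p) ((hsnd p).trans (hcol_eq _))⟩

theorem exists_bijective_of_close_iff (h3 : ∀ a b : L, ∃ c, c ≠ a ∧ c ≠ b)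
    (hf : Bijective f) :
    ∃ h : L → L, Bijective h ∧
      ((∀ p, (f p).1 = (h p.1.1, h p.1.2)) ∨ (∀ p, (f p).1 = (h p.1.2, h p.1.1))) := by
  by_cases hkeep : ∃ p q, ProdClose p.1 q.1 ∧ KeepsFstEq f p q
  · obtain ⟨p₀, q₀, hpq₀, hkeep₀⟩ := hkeep
    obtain ⟨h, hh, hfh⟩ := exists_bijective_of_keepsFstEq hclose h3 hf fun p q hpq =>
      (keepsFstEq_iff_keepsFstEq hclose h3 hf.1 hpq₀ hpq).1 hkeep₀
    exact ⟨h, hh, .inl hfh⟩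
  · push Not at hkeep
    have hclose' : ∀ p q, ProdClose p.1 q.1 ↔ ProdClose (swap (f p)).1 (swap (f q)).1 :=
      fun p q => (hclose p q).trans ProdClose.swap_iff.symm
    have hkeep' : ∀ p q, ProdClose p.1 q.1 → KeepsFstEq (swap ∘ f) p q := by
      intro p q hpq
      have := hkeep p q hpq
      have := ProdClose.snd_eq_iff ((hclose p q).1 hpq)
      unfold KeepsFstEq at *
      simp only [comp_apply, swap, Prod.fst_swap]
      tauto
    obtain ⟨h, hh, hgh⟩ := exists_bijective_of_keepsFstEq hclose' h3
      (swap_involutive.bijective.comp hf) hkeep'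
    exact ⟨h, hh, .inr fun p => congrArg Prod.swap (hgh p)⟩

end OffDiag

variable {K V}

namespace Submodule

lemma exists_notMem_notMem {R M : Type*} [Ring R] [AddCommGroup M] [Module R M]
    {A B : Submodule R M} (hA : A ≠ ⊤) (hB : B ≠ ⊤) :
    ∃ v, v ∉ A ∧ v ∉ B := by
  obtain ⟨v, -, hvA⟩ := SetLike.exists_of_lt hA.lt_top
  obtain ⟨w, -, hwB⟩ := SetLike.exists_of_lt hB.lt_top
  by_cases hvB : v ∈ B
  · by_cases hwA : w ∈ A
    · exact ⟨v + w, fun h => hvA ((A.add_mem_iff_left hwA).1 h),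
        fun h => hwB ((B.add_mem_iff_right hvB).1 h)⟩
    · exact ⟨w, hwA, hwB⟩
  · exact ⟨v, hvA, hvB⟩

lemma exists_finrank_eq_one_ne_ne {A B : Submodule K V} (hA : A ≠ ⊤) (hB : B ≠ ⊤) :
    ∃ C : Submodule K V, finrank K C = 1 ∧ C ≠ A ∧ C ≠ B := by
  obtain ⟨v, hvA, hvB⟩ := exists_notMem_notMem hA hB
  have hv : v ∈ K ∙ v := mem_span_singleton_self v
  exact ⟨K ∙ v, finrank_span_singleton (fun h => hvA (h ▸ A.zero_mem)),
    fun h => hvA (h ▸ hv), fun h => hvB (h ▸ hv)⟩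

end Submodule

lemma subCompl_iff_ne [FiniteDimensional K V] (hV : finrank K V = 2)
    {S U : Submodule K V} (hS : finrank K S = 1) (hU : finrank K U = 1) :
    SubCompl K V S U ↔ S ≠ U := by
  refine ⟨fun h hSU => ?_, fun hSU => ?_⟩
  · rw [← hSU, SubCompl, inf_idem] at h
    rw [h.1, finrank_bot] at hS
    exact zero_ne_one hS
  · have hSU_bot : S ⊓ U = ⊥ := ((Submodule.isAtom_iff_finrank_eq_one.2 hS).disjoint_of_ne
      (Submodule.isAtom_iff_finrank_eq_one.2 hU) hSU).eq_bot
    refine ⟨hSU_bot, Submodule.eq_top_of_finrank_eq ?_⟩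
    have := Submodule.finrank_sup_add_finrank_inf_eq S U
    rw [hSU_bot, finrank_bot, hS, hU] at this
    omega

lemma exists_ne_ne_of_finrank_eq_two [FiniteDimensional K V] (hV : finrank K V = 2)
    (A B : {S : Submodule K V // finrank K S = 1}) : ∃ C, C ≠ A ∧ C ≠ B := by
  have ne_top (S : {S : Submodule K V // finrank K S = 1}) : S.1 ≠ ⊤ :=
    (Submodule.lt_top_of_finrank_lt_finrank (by rw [S.2, hV]; norm_num)).ne
  obtain ⟨C, hC, hCA, hCB⟩ := Submodule.exists_finrank_eq_one_ne_ne (ne_top A) (ne_top B)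
  exact ⟨⟨C, hC⟩, Subtype.coe_ne_coe.1 hCA, Subtype.coe_ne_coe.1 hCB⟩

def gSetEquivOffDiag [FiniteDimensional K V] (hV : finrank K V = 2) :
    GSet K V 2 1 ≃ OffDiag {S : Submodule K V // finrank K S = 1} where
  toFun p := ⟨(⟨p.1.1, p.2.1⟩, ⟨p.1.2, p.2.2.1⟩),
    fun h => (subCompl_iff_ne hV p.2.1 p.2.2.1).1 p.2.2.2 (congrArg Subtype.val h)⟩
  invFun p := ⟨(p.1.1, p.1.2), p.1.1.2, p.1.2.2,
    (subCompl_iff_ne hV p.1.1.2 p.1.2.2).2 (Subtype.coe_ne_coe.2 p.2)⟩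
  left_inv _ := rfl
  right_inv _ := rfl

lemma prodClose_gSetEquivOffDiag [FiniteDimensional K V] (hV : finrank K V = 2)
    (p q : GSet K V 2 1) :
    ProdClose (gSetEquivOffDiag hV p).1 (gSetEquivOffDiag hV q).1 ↔ PairClose K V p.1 q.1 := by
  simp [ProdClose, PairClose, gSetEquivOffDiag]

/-- For `n = 2`, `k = 1`: every closeness preserving transformation of 𝒢 is of the
form `(S,U) ↦ (h S, h U)` or `(S,U) ↦ (h U, h S)` for a bijection `h` of `𝒢₁`. -/
theorem closeness_preserving_dim_two
    {K V : Type*} [DivisionRing K] [AddCommGroup V] [Module K V]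
    [FiniteDimensional K V] (hV : finrank K V = 2)
    (f : GSet K V 2 1 → GSet K V 2 1) (hf : Function.Bijective f)
    (hclose : ∀ p q : GSet K V 2 1,
      PairClose K V p.val q.val ↔ PairClose K V (f p).val (f q).val) :
    ∃ h : {S : Submodule K V // finrank K S = 1} → {S : Submodule K V // finrank K S = 1},
      Function.Bijective h ∧
      ((∀ p : GSet K V 2 1,
          (f p).val.1 = (h ⟨p.val.1, p.property.1⟩).val ∧
          (f p).val.2 = (h ⟨p.val.2, p.property.2.1⟩).val) ∨
       (∀ p : GSet K V 2 1,
          (f p).val.1 = (h ⟨p.val.2, p.property.2.1⟩).val ∧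
          (f p).val.2 = (h ⟨p.val.1, p.property.1⟩).val)) := by
  set e := gSetEquivOffDiag hV
  set g := e ∘ f ∘ e.symm
  have hclose' : ∀ p q, ProdClose p.1 q.1 ↔ ProdClose (g p).1 (g q).1 :=
    e.surjective.forall₂.2 fun p q => by
      simpa only [g, e, comp_apply, Equiv.symm_apply_apply, prodClose_gSetEquivOffDiag] using
        hclose p q
  obtain ⟨h, hh, hform⟩ := OffDiag.exists_bijective_of_close_iff hclose'
    (exists_ne_ne_of_finrank_eq_two hV) (e.bijective.comp (hf.comp e.symm.bijective))
  refine ⟨h, hh, hform.imp (fun H p => ?_) (fun H p => ?_)⟩ <;>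
  · obtain ⟨h₁, h₂⟩ := Prod.ext_iff.1 (H (e p))
    exact ⟨congrArg Subtype.val h₁, congrArg Subtype.val h₂⟩
end

section
/- Let 1 ≤ k ≤ n−1 and let S₁, S₂ be two distinct k-dimensional subspaces of V. Then S₁ and S₂ are adjacent if and only if there exists a k-dimensional subspace S with S ≠ S₁ and S ≠ S₂ such that for every (n−k)-dimensional subspace U of V: if U is complementary to S, then U is complementary to S₁ or U is complementary to S₂. -/
open Module

variable (K V : Type*) [DivisionRing K] [AddCommGroup V] [Module K V]

/-! If `S₁` and `S₂` are adjacent, any hyperplane `S` of `S₁ ⊔ S₂` through `S₁ ⊓ S₂` other than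
`S₁`, `S₂` works: a complement `U` of `S` meets `S₁ ⊔ S₂` in at most a line, so if it met both
`S₁` and `S₂` it would meet them in the same line, which lies in `S₁ ⊓ S₂ ≤ S`.

Conversely, every subspace disjoint from `S` lies in a complement of `S`, so the hypothesis says
that no subspace disjoint from `S` meets both `S₁` and `S₂`. Applied to lines this gives
`S₁ ⊓ S₂ ≤ S`, hence `S₁ ⊓ S₂ < S₁`; applied to planes spanned by a vector of `S₁ \ S` and one of
`S₂ \ S` it gives `S₁ ⊔ S₂ ≤ S ⊔ K ∙ w₁` for any `w₁ ∈ S₁ \ S`, hence `dim (S₁ ⊔ S₂) ≤ k + 1`. -/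

open Submodule

theorem exists_isCompl_and_le_of_disjoint {α : Type*} [Lattice α] [BoundedOrder α]
    [IsModularLattice α] [ComplementedLattice α] {a b : α} (h : Disjoint a b) :
    ∃ c, IsCompl a c ∧ b ≤ c := by
  obtain ⟨d, hd⟩ := exists_isCompl (a ⊔ b)
  refine ⟨b ⊔ d, ⟨h.disjoint_sup_right_of_disjoint_sup_left hd.disjoint, ?_⟩, le_sup_left⟩
  rw [codisjoint_iff, ← sup_assoc, hd.sup_eq_top]

section

variable {K V : Type*} [DivisionRing K] [AddCommGroup V] [Module K V]

theorem subCompl_iff_isCompl (S U : Submodule K V) : SubCompl K V S U ↔ IsCompl S U := by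
  rw [isCompl_iff, disjoint_iff, codisjoint_iff, SubCompl]

theorem inf_le_of_forall_disjoint {S S₁ S₂ : Submodule K V}
    (hS : ∀ T : Submodule K V, Disjoint S T → Disjoint S₁ T ∨ Disjoint S₂ T) :
    S₁ ⊓ S₂ ≤ S := by
  intro w ⟨hw₁, hw₂⟩
  by_contra hw
  rcases hS _ (disjoint_span_singleton_of_notMem hw) with h | h
  · exact hw (disjoint_span_singleton.1 h hw₁ ▸ S.zero_mem)
  · exact hw (disjoint_span_singleton.1 h hw₂ ▸ S.zero_mem)

theorem le_sup_span_of_forall_disjoint {S S₁ S₂ : Submodule K V}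
    (hS : ∀ T : Submodule K V, Disjoint S T → Disjoint S₁ T ∨ Disjoint S₂ T)
    {w₁ : V} (hw₁ : w₁ ∈ S₁) (hw₁S : w₁ ∉ S) : S₂ ≤ S ⊔ span K {w₁} := by
  intro w₂ hw₂
  by_contra hw₂S
  have hT : Disjoint S (span K {w₁} ⊔ span K {w₂}) :=
    (disjoint_span_singleton_of_notMem hw₁S).disjoint_sup_right_of_disjoint_sup_left
      (disjoint_span_singleton_of_notMem hw₂S)
  rcases hS _ hT with h | h
  · exact hw₁S (disjoint_span_singleton.1 (h.mono_right le_sup_left) hw₁ ▸ S.zero_mem)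
  · exact hw₂S (disjoint_span_singleton.1 (h.mono_right le_sup_right) hw₂ ▸ zero_mem _)

variable [FiniteDimensional K V]

theorem finrank_inf_add_finrank_le_of_disjoint {S U W : Submodule K V} (hSU : Disjoint S U)
    (hSW : S ≤ W) : finrank K ↥(W ⊓ U) + finrank K S ≤ finrank K W := by
  have hbot : W ⊓ U ⊓ S = ⊥ := (hSU.symm.mono_left inf_le_right).eq_bot
  have hsup := finrank_sup_add_finrank_inf_eq (W ⊓ U) S
  rw [hbot, finrank_bot, add_zero] at hsup
  exact hsup ▸ finrank_mono (sup_le inf_le_left hSW)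

theorem disjoint_or_disjoint_of_inf_le_of_le_sup_s5 {S S₁ S₂ U : Submodule K V}
    (hlow : S₁ ⊓ S₂ ≤ S) (hup : S ≤ S₁ ⊔ S₂)
    (hrank : finrank K ↥(S₁ ⊔ S₂) = finrank K S + 1) (hSU : Disjoint S U) :
    Disjoint S₁ U ∨ Disjoint S₂ U := by
  by_contra! ⟨h₁, h₂⟩
  have hline : finrank K ↥((S₁ ⊔ S₂) ⊓ U) ≤ 1 := by
    have := finrank_inf_add_finrank_le_of_disjoint hSU hup
    omega
  have eq_line {P : Submodule K V} (hP : P ≤ S₁ ⊔ S₂) (hPU : ¬Disjoint P U) :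
      P ⊓ U = (S₁ ⊔ S₂) ⊓ U :=
    eq_of_le_of_finrank_le (inf_le_inf_right U hP)
      (hline.trans (one_le_finrank_iff.2 (mt disjoint_iff.2 hPU)))
  have hS₂ : S₁ ⊓ U ≤ S₂ := by
    rw [eq_line le_sup_left h₁, ← eq_line le_sup_right h₂]
    exact inf_le_left
  have hS : S₁ ⊓ U ≤ S := (le_inf inf_le_left hS₂).trans hlow
  exact h₁ (disjoint_iff_inf_le.2 ((le_inf hS inf_le_right).trans hSU.le_bot))

theorem exists_between_inf_sup_of_not_le {S₁ S₂ : Submodule K V} (h₁ : ¬S₁ ≤ S₂)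
    (h₂ : ¬S₂ ≤ S₁) :
    ∃ S : Submodule K V, S₁ ⊓ S₂ ≤ S ∧ S ≤ S₁ ⊔ S₂ ∧
      finrank K S = finrank K ↥(S₁ ⊓ S₂) + 1 ∧ S ≠ S₁ ∧ S ≠ S₂ := by
  obtain ⟨x₁, hx₁, hx₁₂⟩ := SetLike.not_le_iff_exists.1 h₁
  obtain ⟨x₂, hx₂, hx₂₁⟩ := SetLike.not_le_iff_exists.1 h₂
  have hv₁ : x₁ + x₂ ∉ S₁ := fun h => hx₂₁ ((S₁.add_mem_iff_right hx₁).1 h)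
  have hv₂ : x₁ + x₂ ∉ S₂ := fun h => hx₁₂ ((S₂.add_mem_iff_left hx₂).1 h)
  have hmem : x₁ + x₂ ∈ S₁ ⊓ S₂ ⊔ span K {x₁ + x₂} := mem_sup_right (mem_span_singleton_self _)
  refine ⟨S₁ ⊓ S₂ ⊔ span K {x₁ + x₂}, le_sup_left, sup_le (inf_le_left.trans le_sup_left) ?_,
    finrank_sup_span_singleton fun h => hv₁ h.1, fun h => hv₁ (h ▸ hmem),
    fun h => hv₂ (h ▸ hmem)⟩
  exact (span_singleton_le_iff_mem _ _).2 (add_mem (mem_sup_left hx₁) (mem_sup_right hx₂))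

theorem subAdj_of_forall_disjoint {S S₁ S₂ : Submodule K V}
    (h₁ : finrank K S₁ = finrank K S) (h₂ : finrank K S₂ = finrank K S) (hS₁ : S ≠ S₁)
    (hS₂ : S ≠ S₂) (hS : ∀ T : Submodule K V, Disjoint S T → Disjoint S₁ T ∨ Disjoint S₂ T) :
    SubAdj K V S₁ S₂ := by
  have hS₁S : ¬S₁ ≤ S := fun h => hS₁ (eq_of_le_of_finrank_le h h₁.ge).symm
  have hS₂S : ¬S₂ ≤ S := fun h => hS₂ (eq_of_le_of_finrank_le h h₂.ge).symm
  obtain ⟨w₁, hw₁, hw₁S⟩ := SetLike.not_le_iff_exists.1 hS₁S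
  obtain ⟨w₂, hw₂, hw₂S⟩ := SetLike.not_le_iff_exists.1 hS₂S
  have hle₂ := le_sup_span_of_forall_disjoint hS hw₁ hw₁S
  have hle₁ : S₁ ≤ S ⊔ span K {w₁} :=
    (le_sup_span_of_forall_disjoint (S₁ := S₂) (fun T hT => (hS T hT).symm) hw₂ hw₂S).trans
      (sup_le le_sup_left ((span_singleton_le_iff_mem _ _).2 (hle₂ hw₂)))
  have hsup : finrank K ↥(S₁ ⊔ S₂) ≤ finrank K S + 1 :=
    finrank_sup_span_singleton hw₁S ▸ finrank_mono (sup_le hle₁ hle₂)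
  have hinf : finrank K ↥(S₁ ⊓ S₂) < finrank K S₁ :=
    finrank_lt_finrank_of_lt <| inf_le_left.lt_of_not_ge fun h =>
      hS₁S (h.trans (inf_le_of_forall_disjoint hS))
  have := finrank_sup_add_finrank_inf_eq S₁ S₂
  exact ⟨h₁.trans h₂.symm, by omega⟩

end

theorem adjacent_iff_common_complements_general
    {K V : Type*} [DivisionRing K] [AddCommGroup V] [Module K V]
    [FiniteDimensional K V] {n k : ℕ} (hV : finrank K V = n)
    (S₁ S₂ : Submodule K V) (h1 : finrank K S₁ = k) (h2 : finrank K S₂ = k) :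
    SubAdj K V S₁ S₂ ↔
      ∃ S : Submodule K V, finrank K S = k ∧ S ≠ S₁ ∧ S ≠ S₂ ∧
        ∀ U : Submodule K V, finrank K U = n - k → SubCompl K V S U →
          (SubCompl K V S₁ U ∨ SubCompl K V S₂ U) := by
  constructor
  · rintro ⟨-, hadj⟩
    have h₁₂ : ¬S₁ ≤ S₂ := fun h => by rw [inf_eq_left.2 h] at hadj; omega
    have h₂₁ : ¬S₂ ≤ S₁ := fun h => by rw [inf_eq_right.2 h] at hadj; omega
    obtain ⟨S, hlow, hup, hS, hS₁, hS₂⟩ := exists_between_inf_sup_of_not_le h₁₂ h₂₁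
    have hsup := finrank_sup_add_finrank_inf_eq S₁ S₂
    refine ⟨S, by omega, hS₁, hS₂, fun U hU hSU => ?_⟩
    refine (disjoint_or_disjoint_of_inf_le_of_le_sup_s5 hlow hup (by omega)
      ((subCompl_iff_isCompl S U).1 hSU).disjoint).imp ?_ ?_ <;>
      exact fun h => (subCompl_iff_isCompl _ U).2 ((isCompl_iff_disjoint _ _ (by omega)).2 h)
  · rintro ⟨S, hS, hS₁, hS₂, hcompl⟩
    refine subAdj_of_forall_disjoint (h1.trans hS.symm) (h2.trans hS.symm) hS₁ hS₂ fun T hST => ?_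
    obtain ⟨U, hSU, hTU⟩ := exists_isCompl_and_le_of_disjoint hST
    have hU : finrank K U = n - k := by
      have := finrank_add_eq_of_isCompl hSU
      omega
    refine (hcompl U hU ((subCompl_iff_isCompl S U).2 hSU)).imp ?_ ?_ <;>
      exact fun h => ((subCompl_iff_isCompl _ U).1 h).disjoint.mono_right hTU

/-- Two distinct `k`-dimensional subspaces `S₁`, `S₂` are adjacent iff there is a
`k`-dimensional subspace `S ∉ {S₁, S₂}` such that every `(n-k)`-dimensional
complement of `S` is a complement of `S₁` or of `S₂`. -/
theorem adjacent_iff_common_complements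
    {K V : Type*} [DivisionRing K] [AddCommGroup V] [Module K V]
    [FiniteDimensional K V] {n k : ℕ} (hn : 2 ≤ n) (hV : finrank K V = n)
    (hk1 : 1 ≤ k) (hk2 : k ≤ n - 1)
    (S₁ S₂ : Submodule K V) (h1 : finrank K S₁ = k) (h2 : finrank K S₂ = k)
    (hne : S₁ ≠ S₂) :
    SubAdj K V S₁ S₂ ↔
      ∃ S : Submodule K V, finrank K S = k ∧ S ≠ S₁ ∧ S ≠ S₂ ∧
        ∀ U : Submodule K V, finrank K U = n - k → SubCompl K V S U →
          (SubCompl K V S₁ U ∨ SubCompl K V S₂ U) :=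
  adjacent_iff_common_complements_general hV S₁ S₂ h1 h2
end

section
/- Let l : V → V be a semilinear bijection (over some automorphism of K). If there exists j with 1 ≤ j ≤ n−1 such that l(S) = S for every j-dimensional subspace S of V, then l(W) = W for every subspace W of V. -/
open Module

variable (K V : Type*) [DivisionRing K] [AddCommGroup V] [Module K V]

/-!
If `l` maps every `j`-dimensional subspace onto itself, it maps every subspace `W` into itself:
when `dim W ≥ j`, each `v ∈ W` lies in a `j`-dimensional subspace of `W`; when `dim W < j < n`,
any point outside `W` is avoided by some `j`-dimensional subspace containing `W`.
Applying this to `l` and to its inverse, which fixes the same subspaces, gives `l(W) = W`.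
-/

namespace Submodule

variable {K V : Type*} [DivisionRing K] [AddCommGroup V] [Module K V] [FiniteDimensional K V]

theorem exists_finrank_eq_of_le_of_le {T W : Submodule K V} (hTW : T ≤ W) {k : ℕ}
    (hTk : finrank K T ≤ k) (hkW : k ≤ finrank K W) :
    ∃ S : Submodule K V, T ≤ S ∧ S ≤ W ∧ finrank K S = k := by
  induction k, hTk using Nat.le_induction with
  | base => exact ⟨T, le_rfl, hTW, rfl⟩
  | succ k _ ih =>
    obtain ⟨S, hTS, hSW, hS⟩ := ih (by omega)
    obtain ⟨w, hwW, hwS⟩ :=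
      SetLike.exists_of_lt (lt_of_le_of_finrank_lt_finrank hSW (by omega))
    refine ⟨S ⊔ K ∙ w, hTS.trans le_sup_left,
      sup_le hSW ((span_singleton_le_iff_mem w W).2 hwW), ?_⟩
    rw [finrank_sup_span_singleton hwS, hS]

theorem exists_le_notMem_finrank_eq {W : Submodule K V} {u : V} (hu : u ∉ W) {k : ℕ}
    (hWk : finrank K W ≤ k) (hk : k < finrank K V) :
    ∃ S : Submodule K V, W ≤ S ∧ u ∉ S ∧ finrank K S = k := by
  have hu0 : u ≠ 0 := fun h => hu (h ▸ W.zero_mem)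
  obtain ⟨C, hWC, hC⟩ := (disjoint_span_singleton_of_notMem hu).exists_isCompl
  have hCk : k ≤ finrank K C := by
    have := finrank_add_eq_of_isCompl hC
    rw [finrank_span_singleton hu0] at this
    omega
  obtain ⟨S, hWS, hSC, hS⟩ := exists_finrank_eq_of_le_of_le hWC hWk hCk
  exact ⟨S, hWS, fun huS => (disjoint_span_singleton' hu0).1 hC.disjoint (hSC huS), hS⟩

theorem mapsTo_of_forall_finrank_eq_image_eq {f : V → V} {j : ℕ} (hj1 : 1 ≤ j)
    (hjV : j < finrank K V)
    (hf : ∀ S : Submodule K V, finrank K S = j → f '' (S : Set V) = (S : Set V))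
    (W : Submodule K V) : Set.MapsTo f W W := by
  intro v hv
  have hmem : ∀ S : Submodule K V, finrank K S = j → v ∈ S → f v ∈ S :=
    fun S hS hvS => (hf S hS).subset (Set.mem_image_of_mem f hvS)
  by_cases hWj : j ≤ finrank K W
  · have hvj : finrank K (K ∙ v) ≤ j :=
      ((finrank_span_le_card ({v} : Set V)).trans_eq (by simp)).trans hj1
    obtain ⟨S, hvS, hSW, hS⟩ :=
      exists_finrank_eq_of_le_of_le ((span_singleton_le_iff_mem v W).2 hv) hvj hWj
    exact hSW (hmem S hS (hvS (mem_span_singleton_self v)))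
  · by_contra hfv
    obtain ⟨S, hWS, hfvS, hS⟩ := exists_le_notMem_finrank_eq hfv (by omega) hjV
    exact hfvS (hmem S hS (hWS hv))

end Submodule

theorem semilinear_fixing_one_grassmannian_fixes_all_general
    {K V : Type*} [DivisionRing K] [AddCommGroup V] [Module K V]
    [FiniteDimensional K V] {n : ℕ} (hV : finrank K V = n)
    (l : V → V) (hb : Function.Bijective l)
    (j : ℕ) (hj1 : 1 ≤ j) (hj2 : j ≤ n - 1)
    (hfix : ∀ S : Submodule K V, finrank K S = j → l '' (S : Set V) = (S : Set V)) :
    ∀ W : Submodule K V, l '' (W : Set V) = (W : Set V) := by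
  have hjV : j < finrank K V := by omega
  obtain ⟨g, hgl, hlg⟩ := Function.bijective_iff_has_inverse.1 hb
  have hgfix : ∀ S : Submodule K V, finrank K S = j → g '' (S : Set V) = (S : Set V) :=
    fun S hS => by rw [← congrArg (g '' ·) (hfix S hS), hgl.image_image]
  intro W
  have hl := Submodule.mapsTo_of_forall_finrank_eq_image_eq hj1 hjV hfix W
  have hg := Submodule.mapsTo_of_forall_finrank_eq_image_eq hj1 hjV hgfix W
  exact ((hlg.leftInvOn _).surjOn hg).image_eq_of_mapsTo hl

/-- If a semilinear bijection `l : V → V` fixes every `j`-dimensional subspace for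
some `1 ≤ j ≤ n - 1`, then it fixes every subspace of `V`. -/
theorem semilinear_fixing_one_grassmannian_fixes_all
    {K V : Type*} [DivisionRing K] [AddCommGroup V] [Module K V]
    [FiniteDimensional K V] {n : ℕ} (hn : 2 ≤ n) (hV : finrank K V = n)
    (σ : K ≃+* K) (l : V → V) (hb : Function.Bijective l)
    (hadd : ∀ x y : V, l (x + y) = l x + l y)
    (hsmul : ∀ (c : K) (v : V), l (c • v) = σ c • l v)
    (j : ℕ) (hj1 : 1 ≤ j) (hj2 : j ≤ n - 1)
    (hfix : ∀ S : Submodule K V, finrank K S = j → l '' (S : Set V) = (S : Set V)) :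
    ∀ W : Submodule K V, l '' (W : Set V) = (W : Set V) :=
  semilinear_fixing_one_grassmannian_fixes_all_general hV l hb j hj1 hj2 hfix
end

section
/- Let S be a k-dimensional subspace of V and let U, U' be two (n−k)-dimensional subspaces both complementary to S. Then there is a finite sequence U = U₀, U₁, …, U_i = U' of (n−k)-dimensional subspaces, each complementary to S, such that consecutive terms are adjacent. -/
open Module

variable (K V : Type*) [DivisionRing K] [AddCommGroup V] [Module K V]

/-!
Complements of `S` are moved by transvections `x ↦ x + f x • v` with `v ∈ S` and `f` vanishing
on `S`: such a map fixes `S` pointwise, so it carries a complement `U` of `S` to another one, and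
it moves `U` only along the hyperplane `U ⊓ ker f`, so the image is adjacent to `U`. Given a second
complement `U'` and `u' ∈ U' \ U`, choose `f` vanishing on `S ⊔ (U ⊓ U')` but not at `u'`, and `v`
so that the image of `U` contains `u'`; the image then meets `U'` in a strictly larger subspace,
and induction on `dim V - dim (U ⊓ U')` finishes.
-/

section

variable {K V}

theorem finrank_le_finrank_inf_ker_add_one [FiniteDimensional K V] (p : Submodule K V)
    (f : Dual K V) : finrank K p ≤ finrank K ↥(p ⊓ LinearMap.ker f) + 1 := by
  have hsum := Submodule.finrank_sup_add_finrank_inf_eq p (LinearMap.ker f)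
  have hker := LinearMap.finrank_range_add_finrank_ker f
  have hsup := Submodule.finrank_le (p ⊔ LinearMap.ker f)
  have hrange : finrank K (LinearMap.range f) ≤ 1 :=
    (Submodule.finrank_le _).trans_eq (finrank_self K)
  omega

theorem subAdj_of_ne_of_finrank_le [FiniteDimensional K V] {P T : Submodule K V} (hPT : P ≠ T)
    (hdim : finrank K P = finrank K T) (hle : finrank K P ≤ finrank K ↥(P ⊓ T) + 1) :
    SubAdj K V P T := by
  have hlt : P ⊓ T < P := by
    refine inf_le_left.lt_of_ne fun h => hPT ?_
    exact Submodule.eq_of_le_of_finrank_eq (inf_eq_left.mp h) hdim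
  have := Submodule.finrank_lt_finrank_of_lt hlt
  exact ⟨hdim, by omega⟩

theorem SubCompl.map_linearEquiv {S U : Submodule K V} (h : SubCompl K V S U) (e : V ≃ₗ[K] V)
    (hS : S.map (e : V →ₗ[K] V) = S) : SubCompl K V S (U.map (e : V →ₗ[K] V)) := by
  rw [← hS]
  constructor
  · rw [← Submodule.map_inf _ e.injective, h.1, Submodule.map_bot]
  · rw [← Submodule.map_sup, h.2, Submodule.map_top, LinearEquiv.range]

theorem exists_subCompl_subAdj_finrank_inf_lt [FiniteDimensional K V] {S U U' : Submodule K V}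
    (hU : SubCompl K V S U) (hU' : SubCompl K V S U') (hU'U : ¬ U' ≤ U) :
    ∃ U'' : Submodule K V, finrank K U'' = finrank K U ∧ SubCompl K V S U'' ∧
      SubAdj K V U U'' ∧ finrank K ↥(U ⊓ U') < finrank K ↥(U'' ⊓ U') := by
  obtain ⟨u', hu'U', hu'U⟩ := SetLike.not_le_iff_exists.mp hU'U
  set W := U ⊓ U'
  have hu'SW : u' ∉ S ⊔ W := by
    intro h
    have : u' ∈ (W ⊔ S) ⊓ U' := ⟨sup_comm S W ▸ h, hu'U'⟩
    rw [sup_inf_assoc_of_le S inf_le_right, hU'.1, sup_bot_eq] at this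
    exact hu'U this.1
  obtain ⟨f, hfu', hf⟩ := (S ⊔ W).exists_dual_map_eq_bot_of_notMem hu'SW inferInstance
  rw [← LinearMap.le_ker_iff_map] at hf
  have hfS : ∀ x ∈ S, f x = 0 := fun x hx => hf (Submodule.mem_sup_left hx)
  obtain ⟨s, hs, u, hu, rfl⟩ := Submodule.mem_sup.mp (hU.2 ▸ Submodule.mem_top : u' ∈ S ⊔ U)
  have hfu : f (s + u) = f u := by rw [map_add, hfS s hs, zero_add]
  have hfv : f ((f u)⁻¹ • s) = 0 := hfS _ (S.smul_mem _ hs)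
  set τ := LinearEquiv.transvection hfv
  have hτ_ker : ∀ x ∈ LinearMap.ker f, τ x = x := fun x hx => by
    rw [LinearEquiv.transvection.apply, LinearMap.mem_ker.mp hx, zero_smul, add_zero]
  have hτu : τ u = s + u := by
    rw [LinearEquiv.transvection.apply, smul_smul, mul_inv_cancel₀ (hfu ▸ hfu'), one_smul,
      add_comm]
  have hτS : S.map (τ : V →ₗ[K] V) = S := by
    ext x
    refine ⟨?_, fun hx => ⟨x, hx, hτ_ker x (hf (Submodule.mem_sup_left hx))⟩⟩
    rintro ⟨y, hy, rfl⟩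
    show τ y ∈ S
    rwa [hτ_ker y (hf (Submodule.mem_sup_left hy))]
  have hmem : ∀ x ∈ U, τ x ∈ U.map (τ : V →ₗ[K] V) := fun x hx => Submodule.mem_map_of_mem hx
  have hW : W ≤ U.map (τ : V →ₗ[K] V) := fun x hx =>
    hτ_ker x (hf (Submodule.mem_sup_right hx)) ▸ hmem x hx.1
  have hu'mem : s + u ∈ U.map (τ : V →ₗ[K] V) := hτu ▸ hmem u hu
  refine ⟨U.map (τ : V →ₗ[K] V), LinearEquiv.finrank_map_eq τ U, hU.map_linearEquiv τ hτS, ?_, ?_⟩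
  · refine subAdj_of_ne_of_finrank_le (fun h => hu'U (h ▸ hu'mem))
      (LinearEquiv.finrank_map_eq τ U).symm ((finrank_le_finrank_inf_ker_add_one U f).trans ?_)
    refine Nat.add_le_add_right (Submodule.finrank_mono (le_inf inf_le_left ?_)) 1
    intro x hx
    exact hτ_ker x hx.2 ▸ hmem x hx.1
  · calc finrank K W < finrank K ↥(W ⊔ Submodule.span K {s + u}) := by
          rw [Submodule.finrank_sup_span_singleton (show s + u ∉ W from fun h => hu'U h.1)]
          exact Nat.lt_succ_self _
      _ ≤ finrank K ↥(U.map (τ : V →ₗ[K] V) ⊓ U') := by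
          refine Submodule.finrank_mono (sup_le (le_inf hW inf_le_right) ?_)
          rw [Submodule.span_singleton_le_iff_mem]
          exact ⟨hu'mem, hu'U'⟩

theorem reflTransGen_subAdj_of_subCompl [FiniteDimensional K V] {m : ℕ} (S : Submodule K V)
    (A B : {W : Submodule K V // finrank K W = m ∧ SubCompl K V S W}) :
    Relation.ReflTransGen
      (fun A B : {W : Submodule K V // finrank K W = m ∧ SubCompl K V S W} =>
        SubAdj K V A.val B.val) A B := by
  by_cases hBA : B.val ≤ A.val
  · obtain rfl : B = A :=
      Subtype.ext (Submodule.eq_of_le_of_finrank_eq hBA (B.2.1.trans A.2.1.symm))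
    exact .refl
  · obtain ⟨U'', hdim, hcompl, hadj, hlt⟩ :=
      exists_subCompl_subAdj_finrank_inf_lt A.2.2 B.2.2 hBA
    -- together with `hlt`, this makes the termination measure decrease
    have := Submodule.finrank_le (U'' ⊓ B.val)
    exact .head hadj (reflTransGen_subAdj_of_subCompl S ⟨U'', hdim.trans A.2.1, hcompl⟩ B)
termination_by finrank K V - finrank K ↥(A.val ⊓ B.val)

end

theorem complements_connected_general
    {K V : Type*} [DivisionRing K] [AddCommGroup V] [Module K V]
    [FiniteDimensional K V] {n k : ℕ}
    (S : Submodule K V)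
    (U U' : {W : Submodule K V // finrank K W = n - k ∧ SubCompl K V S W}) :
    Relation.ReflTransGen
      (fun A B : {W : Submodule K V // finrank K W = n - k ∧ SubCompl K V S W} =>
        SubAdj K V A.val B.val) U U' :=
  reflTransGen_subAdj_of_subCompl S U U'

/-- Any two `(n-k)`-dimensional complements `U`, `U'` of a `k`-dimensional
subspace `S` can be connected by a finite sequence of `(n-k)`-dimensional
complements of `S` in which consecutive terms are adjacent. -/
theorem complements_connected
    {K V : Type*} [DivisionRing K] [AddCommGroup V] [Module K V]
    [FiniteDimensional K V] {n k : ℕ} (hn : 2 ≤ n) (hV : finrank K V = n)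
    (hk1 : 1 ≤ k) (hk2 : k ≤ n - 1)
    (S : Submodule K V) (hS : finrank K S = k)
    (U U' : {W : Submodule K V // finrank K W = n - k ∧ SubCompl K V S W}) :
    Relation.ReflTransGen
      (fun A B : {W : Submodule K V // finrank K W = n - k ∧ SubCompl K V S W} =>
        SubAdj K V A.val B.val) U U' :=
  complements_connected_general S U U'
end

section
/- Let f be a closeness preserving transformation of G. Then either there exist bijections g' of G_k and g'' of G_{n−k} such that f(S,U) = (g'(S), g''(U)) for all (S,U) ∈ G, or there exist bijections g' : G_k → G_{n−k} and g'' : G_{n−k} → G_k such that f(S,U) = (g''(U), g'(S)) for all (S,U) ∈ G. -/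
open Module

variable (K V : Type*) [DivisionRing K] [AddCommGroup V] [Module K V]

/-!
Call two points of 𝒢 collinear when they share a coordinate, so that closeness is collinearity of
distinct points. A point collinear with two distinct points of a line lies on that line; hence as
soon as one neighbour of `p` on the line `{q | q.1 = p.1}` is sent to the line of the same (or the
other) kind through `f p`, `f` sends both lines through `p` to lines of the same (resp. the other)
kind. By injectivity the two behaviours cannot occur at collinear points, and the collinearity
graph is connected because two `k`-dimensional subspaces have a common complement; so one
behaviour holds everywhere, and the maps it induces on the coordinates are `g'` and `g''`.
-/

open Function Relation

namespace Submodule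

variable {K V}

theorem exists_notMem_notMem_of_ne_top {A B : Submodule K V} (hA : A ≠ ⊤) (hB : B ≠ ⊤) :
    ∃ x, x ∉ A ∧ x ∉ B := by
  obtain ⟨a, -, ha⟩ := SetLike.exists_of_lt hA.lt_top
  obtain ⟨b, -, hb⟩ := SetLike.exists_of_lt hB.lt_top
  by_cases haB : a ∈ B
  · by_cases hbA : b ∈ A
    · exact ⟨a + b, fun h => ha ((A.add_mem_iff_left hbA).1 h),
        fun h => hb ((B.add_mem_iff_right haB).1 h)⟩
    · exact ⟨b, hbA, hb⟩
  · exact ⟨a, ha, haB⟩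

theorem exists_isCompl_ne {S U : Submodule K V} (h : IsCompl S U) (hS : S ≠ ⊥)
    (hU : U ≠ ⊥) : ∃ U', IsCompl S U' ∧ U' ≠ U := by
  obtain ⟨s, hsS, hs0⟩ := exists_mem_ne_zero_of_ne_bot hS
  obtain ⟨u, huU, hu0⟩ := exists_mem_ne_zero_of_ne_bot hU
  have hxS : s + u ∉ S := fun hx =>
    hu0 (disjoint_def.1 h.disjoint u ((S.add_mem_iff_right hsS).1 hx) huU)
  have hxU : s + u ∉ U := fun hx =>
    hs0 (disjoint_def.1 h.disjoint s hsS ((U.add_mem_iff_left huU).1 hx))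
  obtain ⟨U', hxU', hSU'⟩ :=
    (disjoint_span_singleton.2 fun hx => absurd hx hxS).symm.exists_isCompl
  exact ⟨U', hSU'.symm, fun hU' => hxU (hU' ▸ hxU' (mem_span_singleton_self _))⟩

variable [FiniteDimensional K V]

theorem sup_ne_top_of_finrank_add_lt {S T : Submodule K V}
    (h : finrank K S + finrank K T < finrank K V) : S ⊔ T ≠ ⊤ := fun hST => by
  have := finrank_add_le_finrank_add_finrank S T
  rw [hST, finrank_top] at this
  omega

theorem exists_isCompl_isCompl_of_finrank_eq {S S' W₀ : Submodule K V}
    (hSS' : finrank K S = finrank K S') (hS : Disjoint S W₀) (hS' : Disjoint S' W₀) :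
    ∃ W, W₀ ≤ W ∧ IsCompl S W ∧ IsCompl S' W := by
  induction W₀ using WellFoundedGT.induction with
  | _ W₀ ih =>
  by_cases hdim : finrank K V ≤ finrank K S + finrank K W₀
  · exact ⟨W₀, le_rfl, (isCompl_iff_disjoint _ _ hdim).2 hS,
      (isCompl_iff_disjoint _ _ (hSS' ▸ hdim)).2 hS'⟩
  · obtain ⟨x, hx, hx'⟩ := exists_notMem_notMem_of_ne_top
      (sup_ne_top_of_finrank_add_lt (S := S) (T := W₀) (by omega))
      (sup_ne_top_of_finrank_add_lt (S := S') (T := W₀) (by omega))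
    have hdisj {T : Submodule K V} (hT : Disjoint T W₀) (hxT : x ∉ T ⊔ W₀) :
        Disjoint T (W₀ ⊔ K ∙ x) :=
      hT.disjoint_sup_right_of_disjoint_sup_left
        ((disjoint_span_singleton (s := T ⊔ W₀)).2 fun h => absurd h hxT)
    have hlt : W₀ < W₀ ⊔ K ∙ x := left_lt_sup.2 fun h =>
      hx (le_sup_right (a := S) (h (mem_span_singleton_self x)))
    obtain ⟨W, hW, hSW, hS'W⟩ := ih _ hlt (hdisj hS hx) (hdisj hS' hx')
    exact ⟨W, le_sup_left.trans hW, hSW, hS'W⟩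

end Submodule

section Grid

/- A type `X` of points embedded in the grid `A × B` by `Function.prod a b`; its lines are the
fibres of `a` and of `b`. -/
variable {X Y A B C D : Type*} {a : X → A} {b : X → B} {c : Y → C} {d : Y → D}
  {f : X → Y} {p q : X}

theorem Function.Surjective.exists_bijective_of_eq_iff {u : X → A} {v : X → B}
    (hu : Surjective u) (hv : Surjective v) (h : ∀ x y, u x = u y ↔ v x = v y) :
    ∃ g : A → B, Bijective g ∧ ∀ x, v x = g (u x) := by
  obtain ⟨s, hs⟩ := hu.hasRightInverse
  have hvs (x : X) : v (s (u x)) = v x := (h _ _).1 (hs (u x))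
  refine ⟨v ∘ s, ⟨fun α β hαβ => ?_, fun γ => ?_⟩, fun x => (hvs x).symm⟩
  · rw [← hs α, ← hs β]
    exact (h _ _).2 hαβ
  · obtain ⟨x, rfl⟩ := hv γ
    exact ⟨u x, hvs x⟩

def SharesCoord (a : X → A) (b : X → B) (x y : X) : Prop := a x = a y ∨ b x = b y

def MapsLinesAt (a : X → A) (b : X → B) (c : Y → C) (d : Y → D) (f : X → Y) (p : X) : Prop :=
  (∀ q, a p = a q → c (f p) = c (f q)) ∧ (∀ q, b p = b q → d (f p) = d (f q))

theorem SharesCoord.left_eq_of_left_eq {x y z : X} (hab : Injective (Function.prod a b))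
    (hxz : SharesCoord a b x z) (hyz : SharesCoord a b y z) (hxy : a x = a y) (hne : x ≠ y) :
    a x = a z := by
  by_contra haz
  have hbxz : b x = b z := hxz.resolve_left haz
  have hbyz : b y = b z := hyz.resolve_left (hxy ▸ haz)
  exact hne (hab (Prod.ext hxy (hbxz.trans hbyz.symm)))

theorem mapsLinesAt_of_left_eq (hab : Injective (Function.prod a b))
    (hcd : Injective (Function.prod c d)) (hf : Injective f)
    (hshare : ∀ x y, SharesCoord a b x y ↔ SharesCoord c d (f x) (f y)) {q₀ : X}
    (hq₀ : a p = a q₀) (hne : p ≠ q₀) (hfq₀ : c (f p) = c (f q₀)) :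
    MapsLinesAt a b c d f p := by
  refine ⟨fun q hq => ?_, fun q hq => ?_⟩
  · exact SharesCoord.left_eq_of_left_eq hcd ((hshare p q).1 (Or.inl hq))
      ((hshare q₀ q).1 (Or.inl (hq₀.symm.trans hq))) hfq₀ (hf.ne hne)
  · by_contra hd
    have hcq : c (f p) = c (f q) := ((hshare p q).1 (Or.inr hq)).resolve_right hd
    have haq : a p = a q := SharesCoord.left_eq_of_left_eq hab (Or.inr hq)
      ((hshare q₀ q).2 (Or.inl (hfq₀.symm.trans hcq))) hq₀ hne
    exact hd (congrArg (d ∘ f) (hab (Prod.ext haq hq)))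

theorem mapsLinesAt_or_mapsLinesAt_swap (hab : Injective (Function.prod a b))
    (hcd : Injective (Function.prod c d)) (hf : Injective f)
    (hshare : ∀ x y, SharesCoord a b x y ↔ SharesCoord c d (f x) (f y))
    (hline : ∀ p, ∃ q, a p = a q ∧ p ≠ q) (p : X) :
    MapsLinesAt a b c d f p ∨ MapsLinesAt a b d c f p := by
  obtain ⟨q₀, hq₀, hne⟩ := hline p
  rcases (hshare p q₀).1 (Or.inl hq₀) with hc | hd
  · exact Or.inl (mapsLinesAt_of_left_eq hab hcd hf hshare hq₀ hne hc)
  · exact Or.inr (mapsLinesAt_of_left_eq hab (Prod.swap_injective.comp hcd) hf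
      (fun x y => (hshare x y).trans or_comm) hq₀ hne hd)

theorem eq_of_mapsLinesAt_of_mapsLinesAt_swap (hcd : Injective (Function.prod c d))
    (hf : Injective f) (hp : MapsLinesAt a b c d f p) (hq : MapsLinesAt a b d c f q)
    (hpq : SharesCoord a b p q) : p = q := by
  refine hf (hcd ?_)
  rcases hpq with h | h
  · exact Prod.ext (hp.1 q h) (hq.1 p h.symm).symm
  · exact Prod.ext (hq.2 p h.symm).symm (hp.2 q h)

theorem forall_mapsLinesAt_or_forall_mapsLinesAt_swap (hab : Injective (Function.prod a b))
    (hcd : Injective (Function.prod c d)) (hf : Injective f)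
    (hshare : ∀ x y, SharesCoord a b x y ↔ SharesCoord c d (f x) (f y))
    (hline : ∀ p, ∃ q, a p = a q ∧ p ≠ q) (hconn : ∀ p q, ReflTransGen (SharesCoord a b) p q) :
    (∀ p, MapsLinesAt a b c d f p) ∨ (∀ p, MapsLinesAt a b d c f p) := by
  have hor := mapsLinesAt_or_mapsLinesAt_swap hab hcd hf hshare hline
  by_cases h : ∃ p, MapsLinesAt a b c d f p
  · obtain ⟨p, hp⟩ := h
    refine Or.inl fun q => ?_
    induction hconn p q with
    | refl => exact hp
    | tail _ hst ih =>
      exact (hor _).elim id fun hswap =>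
        eq_of_mapsLinesAt_of_mapsLinesAt_swap hcd hf ih hswap hst ▸ ih
  · exact Or.inr fun p => (hor p).resolve_left fun hp => h ⟨p, hp⟩

theorem eq_iff_of_forall_mapsLinesAt (hcd : Injective (Function.prod c d)) (hf : Injective f)
    (hshare : ∀ x y, SharesCoord a b x y ↔ SharesCoord c d (f x) (f y))
    (hmaps : ∀ p, MapsLinesAt a b c d f p) :
    (∀ p q, a p = a q ↔ c (f p) = c (f q)) ∧ (∀ p q, b p = b q ↔ d (f p) = d (f q)) := by
  refine ⟨fun p q => ⟨(hmaps p).1 q, fun h => ?_⟩, fun p q => ⟨(hmaps p).2 q, fun h => ?_⟩⟩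
  · refine ((hshare p q).2 (Or.inl h)).elim id fun hb => ?_
    rw [hf (hcd (Prod.ext h ((hmaps p).2 q hb)))]
  · refine ((hshare p q).2 (Or.inr h)).elim (fun ha => ?_) id
    rw [hf (hcd (Prod.ext ((hmaps p).1 q ha) h))]

theorem exists_bijective_of_forall_mapsLinesAt (hcd : Injective (Function.prod c d))
    (hf : Bijective f) (hshare : ∀ x y, SharesCoord a b x y ↔ SharesCoord c d (f x) (f y))
    (ha : Surjective a) (hb : Surjective b) (hc : Surjective c) (hd : Surjective d)
    (hmaps : ∀ p, MapsLinesAt a b c d f p) :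
    ∃ (g₁ : A → C) (g₂ : B → D), Bijective g₁ ∧ Bijective g₂ ∧
      ∀ p, c (f p) = g₁ (a p) ∧ d (f p) = g₂ (b p) := by
  obtain ⟨hac, hbd⟩ := eq_iff_of_forall_mapsLinesAt hcd hf.1 hshare hmaps
  obtain ⟨g₁, hg₁, h₁⟩ := ha.exists_bijective_of_eq_iff (hc.comp hf.2) hac
  obtain ⟨g₂, hg₂, h₂⟩ := hb.exists_bijective_of_eq_iff (hd.comp hf.2) hbd
  exact ⟨g₁, g₂, hg₁, hg₂, fun p => ⟨h₁ p, h₂ p⟩⟩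

theorem exists_bijective_or_exists_bijective_swap (hab : Injective (Function.prod a b))
    (hcd : Injective (Function.prod c d)) (hf : Bijective f)
    (hshare : ∀ x y, SharesCoord a b x y ↔ SharesCoord c d (f x) (f y))
    (hline : ∀ p, ∃ q, a p = a q ∧ p ≠ q) (hconn : ∀ p q, ReflTransGen (SharesCoord a b) p q)
    (ha : Surjective a) (hb : Surjective b) (hc : Surjective c) (hd : Surjective d) :
    (∃ (g₁ : A → C) (g₂ : B → D), Bijective g₁ ∧ Bijective g₂ ∧
      ∀ p, c (f p) = g₁ (a p) ∧ d (f p) = g₂ (b p)) ∨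
    (∃ (g₁ : A → D) (g₂ : B → C), Bijective g₁ ∧ Bijective g₂ ∧
      ∀ p, c (f p) = g₂ (b p) ∧ d (f p) = g₁ (a p)) := by
  refine (forall_mapsLinesAt_or_forall_mapsLinesAt_swap hab hcd hf.1 hshare hline hconn).imp
    (exists_bijective_of_forall_mapsLinesAt hcd hf hshare ha hb hc hd) fun hmaps => ?_
  obtain ⟨g₁, g₂, hg₁, hg₂, h⟩ := exists_bijective_of_forall_mapsLinesAt
    (Prod.swap_injective.comp hcd) hf (fun x y => (hshare x y).trans or_comm) ha hb hd hc hmaps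
  exact ⟨g₁, g₂, hg₁, hg₂, fun p => (h p).symm⟩

end Grid

section GSet

variable {K V} {n k : ℕ}

def gsetFst (p : GSet K V n k) : {S : Submodule K V // finrank K S = k} := ⟨p.val.1, p.property.1⟩

def gsetSnd (p : GSet K V n k) : {U : Submodule K V // finrank K U = n - k} :=
  ⟨p.val.2, p.property.2.1⟩

theorem isCompl_of_mem_gset (p : GSet K V n k) : IsCompl p.val.1 p.val.2 :=
  ⟨disjoint_iff.2 p.property.2.2.1, codisjoint_iff.2 p.property.2.2.2⟩

theorem injective_gsetFst_prod_gsetSnd :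
    Injective (Function.prod gsetFst gsetSnd : GSet K V n k → _) := fun _ _ h =>
  Subtype.ext (Prod.ext (congrArg (·.1.val) h) (congrArg (·.2.val) h))

theorem sharesCoord_gset_iff {p q : GSet K V n k} :
    SharesCoord gsetFst gsetSnd p q ↔ p = q ∨ PairClose K V p.val q.val := by
  simp only [SharesCoord, PairClose, gsetFst, gsetSnd, Subtype.ext_iff, Prod.ext_iff]
  tauto

theorem sharesCoord_iff_of_pairClose_iff {f : GSet K V n k → GSet K V n k} (hf : Injective f)
    (hclose : ∀ p q : GSet K V n k,
      PairClose K V p.val q.val ↔ PairClose K V (f p).val (f q).val) (p q : GSet K V n k) :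
    SharesCoord gsetFst gsetSnd p q ↔ SharesCoord gsetFst gsetSnd (f p) (f q) := by
  rw [sharesCoord_gset_iff, sharesCoord_gset_iff, hf.eq_iff, hclose]

variable [FiniteDimensional K V]

theorem surjective_gsetFst (hV : finrank K V = n) :
    Surjective (gsetFst : GSet K V n k → _) := by
  rintro ⟨S, hS⟩
  obtain ⟨U, hSU⟩ := S.exists_isCompl
  have := Submodule.finrank_add_eq_of_isCompl hSU
  exact ⟨⟨(S, U), hS, show finrank K U = n - k by omega, hSU.inf_eq_bot, hSU.sup_eq_top⟩, rfl⟩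

theorem surjective_gsetSnd (hV : finrank K V = n) (hk : k ≤ n) :
    Surjective (gsetSnd : GSet K V n k → _) := by
  rintro ⟨U, hU⟩
  obtain ⟨S, hUS⟩ := U.exists_isCompl
  have := Submodule.finrank_add_eq_of_isCompl hUS
  exact ⟨⟨(S, U), show finrank K S = k by omega, hU, hUS.symm.inf_eq_bot, hUS.symm.sup_eq_top⟩,
    rfl⟩

theorem exists_gsetFst_eq_ne (hk1 : 1 ≤ k) (hk2 : k ≤ n - 1) (p : GSet K V n k) :
    ∃ q, gsetFst p = gsetFst q ∧ p ≠ q := by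
  have hp := isCompl_of_mem_gset p
  obtain ⟨U, hSU, hne⟩ := Submodule.exists_isCompl_ne hp
    (mt Submodule.finrank_eq_zero.2 (by rw [p.property.1]; omega))
    (mt Submodule.finrank_eq_zero.2 (by rw [p.property.2.1]; omega))
  have := Submodule.finrank_add_eq_of_isCompl hp
  have := Submodule.finrank_add_eq_of_isCompl hSU
  have hU : finrank K U = n - k := by
    rw [← p.property.2.1]
    omega
  exact ⟨⟨(p.val.1, U), p.property.1, hU, hSU.inf_eq_bot, hSU.sup_eq_top⟩, rfl,
    fun h => hne (congrArg (·.val.2) h).symm⟩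

theorem reflTransGen_sharesCoord_gset (p q : GSet K V n k) :
    ReflTransGen (SharesCoord gsetFst gsetSnd) p q := by
  obtain ⟨W, -, hpW, hqW⟩ := Submodule.exists_isCompl_isCompl_of_finrank_eq
    (p.property.1.trans q.property.1.symm) disjoint_bot_right disjoint_bot_right
  have hW : finrank K W = n - k := by
    have := Submodule.finrank_add_eq_of_isCompl hpW
    have := Submodule.finrank_add_eq_of_isCompl (isCompl_of_mem_gset p)
    rw [← p.property.2.1]
    omega
  let p' : GSet K V n k := ⟨(p.val.1, W), p.property.1, hW, hpW.inf_eq_bot, hpW.sup_eq_top⟩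
  let q' : GSet K V n k := ⟨(q.val.1, W), q.property.1, hW, hqW.inf_eq_bot, hqW.sup_eq_top⟩
  exact .head (b := p') (Or.inl rfl) (.head (b := q') (Or.inr rfl) (.single (Or.inl rfl)))

end GSet

theorem closeness_preserving_factors_general
    {K V : Type*} [DivisionRing K] [AddCommGroup V] [Module K V]
    [FiniteDimensional K V] {n k : ℕ} (hV : finrank K V = n)
    (hk1 : 1 ≤ k) (hk2 : k ≤ n - 1)
    (f : GSet K V n k → GSet K V n k) (hf : Function.Bijective f)
    (hclose : ∀ p q : GSet K V n k,
      PairClose K V p.val q.val ↔ PairClose K V (f p).val (f q).val) :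
    (∃ (g' : {S : Submodule K V // finrank K S = k} →
             {S : Submodule K V // finrank K S = k})
       (g'' : {U : Submodule K V // finrank K U = n - k} →
              {U : Submodule K V // finrank K U = n - k}),
        Function.Bijective g' ∧ Function.Bijective g'' ∧
        ∀ p : GSet K V n k,
          (f p).val.1 = (g' ⟨p.val.1, p.property.1⟩).val ∧
          (f p).val.2 = (g'' ⟨p.val.2, p.property.2.1⟩).val) ∨
    (∃ (g' : {S : Submodule K V // finrank K S = k} →
             {U : Submodule K V // finrank K U = n - k})
       (g'' : {U : Submodule K V // finrank K U = n - k} →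
              {S : Submodule K V // finrank K S = k}),
        Function.Bijective g' ∧ Function.Bijective g'' ∧
        ∀ p : GSet K V n k,
          (f p).val.1 = (g'' ⟨p.val.2, p.property.2.1⟩).val ∧
          (f p).val.2 = (g' ⟨p.val.1, p.property.1⟩).val) := by
  have hk : k ≤ n := by omega
  obtain ⟨g', g'', hg', hg'', h⟩ | ⟨g', g'', hg', hg'', h⟩ :=
    exists_bijective_or_exists_bijective_swap injective_gsetFst_prod_gsetSnd
      injective_gsetFst_prod_gsetSnd hf (sharesCoord_iff_of_pairClose_iff hf.1 hclose)
      (exists_gsetFst_eq_ne hk1 hk2) reflTransGen_sharesCoord_gset (surjective_gsetFst hV)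
      (surjective_gsetSnd hV hk) (surjective_gsetFst hV) (surjective_gsetSnd hV hk)
  · exact Or.inl ⟨g', g'', hg', hg'', fun p =>
      ⟨congrArg Subtype.val (h p).1, congrArg Subtype.val (h p).2⟩⟩
  · exact Or.inr ⟨g', g'', hg', hg'', fun p =>
      ⟨congrArg Subtype.val (h p).1, congrArg Subtype.val (h p).2⟩⟩

/-- Every closeness preserving transformation of 𝒢 is the restriction of `g' × g''`
or of `g' ⋈ g''` for bijections between the Grassmannians. -/
theorem closeness_preserving_factors
    {K V : Type*} [DivisionRing K] [AddCommGroup V] [Module K V]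
    [FiniteDimensional K V] {n k : ℕ} (hn : 2 ≤ n) (hV : finrank K V = n)
    (hk1 : 1 ≤ k) (hk2 : k ≤ n - 1)
    (f : GSet K V n k → GSet K V n k) (hf : Function.Bijective f)
    (hclose : ∀ p q : GSet K V n k,
      PairClose K V p.val q.val ↔ PairClose K V (f p).val (f q).val) :
    (∃ (g' : {S : Submodule K V // finrank K S = k} →
             {S : Submodule K V // finrank K S = k})
       (g'' : {U : Submodule K V // finrank K U = n - k} →
              {U : Submodule K V // finrank K U = n - k}),
        Function.Bijective g' ∧ Function.Bijective g'' ∧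
        ∀ p : GSet K V n k,
          (f p).val.1 = (g' ⟨p.val.1, p.property.1⟩).val ∧
          (f p).val.2 = (g'' ⟨p.val.2, p.property.2.1⟩).val) ∨
    (∃ (g' : {S : Submodule K V // finrank K S = k} →
             {U : Submodule K V // finrank K U = n - k})
       (g'' : {U : Submodule K V // finrank K U = n - k} →
              {S : Submodule K V // finrank K S = k}),
        Function.Bijective g' ∧ Function.Bijective g'' ∧
        ∀ p : GSet K V n k,
          (f p).val.1 = (g'' ⟨p.val.2, p.property.2.1⟩).val ∧
          (f p).val.2 = (g' ⟨p.val.1, p.property.1⟩).val) :=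
  closeness_preserving_factors_general hV hk1 hk2 f hf hclose
end

section
/- Let 1 < k < n−1, let S be a k-dimensional subspace and let U, U' be adjacent (n−k)-dimensional subspaces of V. Then the double perp of the two-element set {(S,U), (S,U')} in G_k × G_{n−k} equals {(S,Y) : Y ∈ G_{n−k}, U ∩ U' ⊆ Y ⊆ U + U'}. -/
open Module

variable (K V : Type*) [DivisionRing K] [AddCommGroup V] [Module K V]

/-- The Grassmannian of `i`-dimensional subspaces of `V`. -/
abbrev Grass (i : ℕ) := {S : Submodule K V // finrank K S = i}

/-- Adjacency on the product 𝒢_k × 𝒢_{n-k}. -/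
def ProdAdj (n k : ℕ) (p q : Grass K V k × Grass K V (n - k)) : Prop :=
  (p.1 = q.1 ∧ SubAdj K V p.2.val q.2.val) ∨
  (SubAdj K V p.1.val q.1.val ∧ p.2 = q.2)

/-- The perp of a subset of 𝒢_k × 𝒢_{n-k}: all pairs equal or adjacent to every
element of the set. -/
def perpSet (n k : ℕ) (M : Set (Grass K V k × Grass K V (n - k))) :
    Set (Grass K V k × Grass K V (n - k)) :=
  {p | ∀ q ∈ M, p = q ∨ ProdAdj K V n k p q}

/-!
Write `D = U ⊓ U'` and `B = U ⊔ U'`, of dimensions `n - k - 1` and `n - k + 1`. A pair equal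
or adjacent to both `(S, U)` and `(S, U')` has first coordinate `S`, and an `(n - k)`-space is
equal or adjacent to both `U` and `U'` exactly when it contains `D` or lies in `B`: the perp is
the star of `D` together with the top of `B`. A `Y` with `D ≤ Y ≤ B` meets every member of
either family in dimension at least `n - k - 1`. Conversely, if `D ≤ Y` but `¬ Y ≤ B`, then
`Y ⊓ B = D`, and a hyperplane `W` of `B` missing a nonzero vector of `D` meets `Y` in `D ⊓ W`,
too small for adjacency; dually, if `Y ≤ B` but `¬ D ≤ Y`, use `W = D ⊔ K ∙ v` with `v ∉ B`.
-/

section Adjacency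

variable {K V : Type*} [DivisionRing K] [AddCommGroup V] [Module K V]

theorem SubAdj.symm {P T : Submodule K V} (h : SubAdj K V P T) : SubAdj K V T P :=
  ⟨h.1.symm, by rw [inf_comm, ← h.1]; exact h.2⟩

theorem SubAdj.ne {P T : Submodule K V} (h : SubAdj K V P T) : P ≠ T := by
  rintro rfl
  have := h.2
  rw [inf_idem] at this
  omega

theorem eq_or_subAdj_comm {P T : Submodule K V} :
    P = T ∨ SubAdj K V P T ↔ T = P ∨ SubAdj K V T P :=
  ⟨fun h => h.imp Eq.symm SubAdj.symm, fun h => h.imp Eq.symm SubAdj.symm⟩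

variable [FiniteDimensional K V]

theorem SubAdj.finrank_sup {P T : Submodule K V} (h : SubAdj K V P T) :
    finrank K ↥(P ⊔ T) = finrank K P + 1 := by
  have := Submodule.finrank_sup_add_finrank_inf_eq P T
  have := h.2
  have := h.1
  omega

theorem eq_or_subAdj_iff {P T : Submodule K V} (h : finrank K P = finrank K T) :
    P = T ∨ SubAdj K V P T ↔ finrank K P ≤ finrank K ↥(P ⊓ T) + 1 := by
  constructor
  · rintro (rfl | hPT)
    · rw [inf_idem]; omega
    · exact hPT.2.le
  · intro hle
    by_cases hPT : P = T
    · exact Or.inl hPT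
    have hlt : P ⊓ T < P := inf_le_left.lt_of_ne fun e =>
      hPT (Submodule.eq_of_le_of_finrank_eq (inf_eq_left.mp e) h)
    have := Submodule.finrank_lt_finrank_of_lt hlt
    exact Or.inr ⟨h, by omega⟩

theorem eq_or_subAdj_of_le_inf {P T D : Submodule K V} (h : finrank K P = finrank K T)
    (hD : finrank K D + 1 = finrank K P) (hDP : D ≤ P) (hDT : D ≤ T) :
    P = T ∨ SubAdj K V P T := by
  have := Submodule.finrank_mono (le_inf hDP hDT)
  exact (eq_or_subAdj_iff h).2 (by omega)

theorem eq_or_subAdj_of_sup_le {P T B : Submodule K V} (h : finrank K P = finrank K T)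
    (hB : finrank K B = finrank K P + 1) (hPB : P ≤ B) (hTB : T ≤ B) :
    P = T ∨ SubAdj K V P T := by
  have := Submodule.finrank_sup_add_finrank_inf_eq P T
  have := Submodule.finrank_mono (sup_le hPB hTB)
  exact (eq_or_subAdj_iff h).2 (by omega)

theorem SubAdj.eq_or_subAdj_and_eq_or_subAdj_iff {U U' W : Submodule K V}
    (hUU' : SubAdj K V U U') (hW : finrank K W = finrank K U) :
    (W = U ∨ SubAdj K V W U) ∧ (W = U' ∨ SubAdj K V W U') ↔ U ⊓ U' ≤ W ∨ W ≤ U ⊔ U' := by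
  have hD := hUU'.2
  have hB := hUU'.finrank_sup
  have hW' := hW.trans hUU'.1
  constructor
  · rw [eq_or_subAdj_iff hW, eq_or_subAdj_iff hW', or_iff_not_imp_left]
    rintro ⟨h, h'⟩ hDW
    have hlt := Submodule.finrank_lt_finrank_of_lt (inf_le_right.lt_of_ne
      fun e => hDW (e ▸ inf_le_left) : W ⊓ (U ⊓ U') < U ⊓ U')
    have hdim := Submodule.finrank_sup_add_finrank_inf_eq (W ⊓ U) (W ⊓ U')
    rw [← inf_inf_distrib_left] at hdim
    have hWeq : W ⊓ U ⊔ W ⊓ U' = W :=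
      Submodule.eq_of_le_of_finrank_le (sup_le inf_le_left inf_le_left) (by omega)
    rw [← hWeq]
    exact sup_le_sup inf_le_right inf_le_right
  · rintro (hDW | hWB)
    · exact ⟨eq_or_subAdj_of_le_inf hW (by omega) hDW inf_le_left,
        eq_or_subAdj_of_le_inf hW' (by omega) hDW inf_le_right⟩
    · exact ⟨eq_or_subAdj_of_sup_le hW (by omega) hWB le_sup_left,
        eq_or_subAdj_of_sup_le hW' (by omega) hWB le_sup_right⟩

theorem exists_le_finrank_add_one_eq_not_le {D B : Submodule K V} (hD : D ≠ ⊥) (hDB : D ≤ B) :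
    ∃ W : Submodule K V, W ≤ B ∧ finrank K W + 1 = finrank K B ∧ ¬ D ≤ W := by
  obtain ⟨v, hvD, hv0⟩ := Submodule.exists_mem_ne_zero_of_ne_bot hD
  let v' : B := ⟨v, hDB hvD⟩
  obtain ⟨W', hc⟩ := Submodule.exists_isCompl (K ∙ v')
  refine ⟨W'.map B.subtype, Submodule.map_subtype_le _ _, ?_, fun hDW => ?_⟩
  · have := Submodule.finrank_add_eq_of_isCompl hc
    rw [finrank_span_singleton (by simpa [v'] using hv0)] at this
    rw [Submodule.finrank_map_subtype_eq]
    omega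
  · obtain ⟨w, hw, hwv⟩ := Submodule.mem_map.mp (hDW hvD)
    have : w = v' := Subtype.ext hwv
    subst this
    have := Submodule.disjoint_def.mp hc.disjoint v' (Submodule.mem_span_singleton_self v') hw
    exact hv0 congr(Subtype.val $this)

theorem exists_le_finrank_eq_add_one_not_le {D B : Submodule K V} (hB : B ≠ ⊤) (hDB : D ≤ B) :
    ∃ W : Submodule K V, D ≤ W ∧ finrank K W = finrank K D + 1 ∧ ¬ W ≤ B := by
  obtain ⟨v, hv⟩ : ∃ v, v ∉ B := SetLike.exists_not_mem_of_ne_top B hB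
  have hv0 : v ≠ 0 := fun h => hv (h ▸ B.zero_mem)
  have hdisj : Disjoint D (K ∙ v) :=
    (Submodule.disjoint_span_singleton' hv0).2 fun h => hv (hDB h)
  refine ⟨D ⊔ K ∙ v, le_sup_left, ?_, fun h => hv (h (Submodule.mem_sup_right
    (Submodule.mem_span_singleton_self v)))⟩
  have := Submodule.finrank_sup_add_finrank_inf_eq D (K ∙ v)
  rw [hdisj.eq_bot, finrank_bot, finrank_span_singleton hv0] at this
  omega

theorem inf_eq_of_le_of_not_le {D P B : Submodule K V} (hDP : D ≤ P) (hDB : D ≤ B)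
    (hPB : ¬ P ≤ B) (hD : finrank K D + 1 = finrank K P) : P ⊓ B = D := by
  have hlt := Submodule.finrank_lt_finrank_of_lt
    (inf_le_left.lt_of_ne fun e => hPB (inf_eq_left.mp e) : P ⊓ B < P)
  exact (Submodule.eq_of_le_of_finrank_le (le_inf hDP hDB) (by omega)).symm

theorem not_eq_or_subAdj_of_inf_eq {D P B T : Submodule K V} (hPB : P ⊓ B = D)
    (hTB : T ≤ B) (hDT : ¬ D ≤ T) (h : finrank K P = finrank K T)
    (hD : finrank K D + 1 = finrank K P) : ¬ (P = T ∨ SubAdj K V P T) := by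
  have hPT : P ⊓ T = D ⊓ T := by rw [← hPB, inf_assoc, inf_eq_right.mpr hTB]
  have := Submodule.finrank_lt_finrank_of_lt
    (inf_le_left.lt_of_ne fun e => hDT (inf_eq_left.mp e) : D ⊓ T < D)
  rw [eq_or_subAdj_iff h, hPT]
  omega

theorem SubAdj.le_sup_of_forall_eq_or_subAdj {U U' Y : Submodule K V} {m : ℕ}
    (hUU' : SubAdj K V U U') (hU : finrank K U = m) (hm : 2 ≤ m) (hY : finrank K Y = m)
    (hDY : U ⊓ U' ≤ Y) (h : ∀ W : Submodule K V, finrank K W = m → W ≤ U ⊔ U' →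
      Y = W ∨ SubAdj K V Y W) : Y ≤ U ⊔ U' := by
  by_contra hYB
  have hD := hUU'.2
  have hB := hUU'.finrank_sup
  have hD0 : U ⊓ U' ≠ ⊥ := fun h0 => by rw [h0, finrank_bot] at hD; omega
  obtain ⟨W, hWB, hW, hDW⟩ :=
    exists_le_finrank_add_one_eq_not_le hD0 (inf_le_sup : U ⊓ U' ≤ U ⊔ U')
  have hYD := inf_eq_of_le_of_not_le hDY inf_le_sup hYB (by omega)
  exact not_eq_or_subAdj_of_inf_eq hYD hWB hDW (by omega) (by omega) (h W (by omega) hWB)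

theorem SubAdj.inf_le_of_forall_eq_or_subAdj {U U' Y : Submodule K V} {m : ℕ}
    (hUU' : SubAdj K V U U') (hU : finrank K U = m) (hm : m + 1 < finrank K V)
    (hY : finrank K Y = m) (hYB : Y ≤ U ⊔ U') (h : ∀ W : Submodule K V, finrank K W = m →
      U ⊓ U' ≤ W → Y = W ∨ SubAdj K V Y W) : U ⊓ U' ≤ Y := by
  by_contra hDY
  have hD := hUU'.2
  have hB := hUU'.finrank_sup
  have hB0 : U ⊔ U' ≠ ⊤ := fun h0 => by rw [h0, finrank_top] at hB; omega
  obtain ⟨W, hDW, hW, hWB⟩ :=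
    exists_le_finrank_eq_add_one_not_le hB0 (inf_le_sup : U ⊓ U' ≤ U ⊔ U')
  have hWD := inf_eq_of_le_of_not_le hDW inf_le_sup hWB (by omega)
  exact not_eq_or_subAdj_of_inf_eq hWD hYB hDY (by omega) (by omega)
    (eq_or_subAdj_comm.1 (h W (by omega) hDW))

theorem SubAdj.inf_le_and_le_sup_iff {U U' Y : Submodule K V} {m : ℕ}
    (hUU' : SubAdj K V U U') (hU : finrank K U = m) (hm : 2 ≤ m) (hmV : m + 1 < finrank K V)
    (hY : finrank K Y = m) :
    U ⊓ U' ≤ Y ∧ Y ≤ U ⊔ U' ↔ ∀ W : Submodule K V, finrank K W = m →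
      (U ⊓ U' ≤ W ∨ W ≤ U ⊔ U') → Y = W ∨ SubAdj K V Y W := by
  have hD := hUU'.2
  have hB := hUU'.finrank_sup
  constructor
  · rintro ⟨hDY, hYB⟩ W hW (hDW | hWB)
    · exact eq_or_subAdj_of_le_inf (hY.trans hW.symm) (by omega) hDY hDW
    · exact eq_or_subAdj_of_sup_le (hY.trans hW.symm) (by omega) hYB hWB
  · intro h
    have hYU := h U hU (Or.inl inf_le_left)
    have hYU' := h U' (hUU'.1 ▸ hU) (Or.inl inf_le_right)
    rcases (hUU'.eq_or_subAdj_and_eq_or_subAdj_iff (hY.trans hU.symm)).1 ⟨hYU, hYU'⟩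
      with hDY | hYB
    · exact ⟨hDY, hUU'.le_sup_of_forall_eq_or_subAdj hU hm hY hDY fun W hW hWB =>
        h W hW (Or.inr hWB)⟩
    · exact ⟨hUU'.inf_le_of_forall_eq_or_subAdj hU hmV hY hYB fun W hW hDW =>
        h W hW (Or.inl hDW), hYB⟩

end Adjacency

section Perp

variable {K V : Type*} [DivisionRing K] [AddCommGroup V] [Module K V] {n k : ℕ}

theorem perpSet_anti : Antitone (perpSet K V n k) :=
  fun _ _ hMN _ hp q hq => hp q (hMN hq)

theorem ProdAdj.symm {p q : Grass K V k × Grass K V (n - k)} (h : ProdAdj K V n k p q) :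
    ProdAdj K V n k q p :=
  h.imp (fun h => ⟨h.1.symm, h.2.symm⟩) fun h => ⟨h.1.symm, h.2.symm⟩

theorem pair_subset_perpSet {p q : Grass K V k × Grass K V (n - k)}
    (h : ProdAdj K V n k p q) : {p, q} ⊆ perpSet K V n k {p, q} := by
  rintro r (rfl | rfl) s (rfl | rfl)
  exacts [Or.inl rfl, Or.inr h, Or.inr h.symm, Or.inl rfl]

theorem snd_eq_of_eq_or_prodAdj {p q : Grass K V k × Grass K V (n - k)} (h1 : p.1 ≠ q.1)
    (h : p = q ∨ ProdAdj K V n k p q) : p.2 = q.2 := by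
  rcases h with rfl | ⟨he, -⟩ | ⟨-, he⟩
  exacts [rfl, absurd he h1, he]

theorem eq_or_prodAdj_iff_of_fst_eq {p q : Grass K V k × Grass K V (n - k)} (h1 : p.1 = q.1) :
    p = q ∨ ProdAdj K V n k p q ↔ p.2.val = q.2.val ∨ SubAdj K V p.2.val q.2.val := by
  constructor
  · rintro (rfl | ⟨-, h⟩ | ⟨h, -⟩)
    exacts [Or.inl rfl, Or.inr h, absurd congr(Subtype.val $h1) h.ne]
  · rintro (h | h)
    exacts [Or.inl (Prod.ext h1 (Subtype.ext h)), Or.inr (Or.inl ⟨h1, h⟩)]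

variable [FiniteDimensional K V]

theorem mem_perpSet_pair_iff {S U U' : Submodule K V} (hS : finrank K S = k)
    (hU : finrank K U = n - k) (hU' : finrank K U' = n - k) (hUU' : SubAdj K V U U')
    {p : Grass K V k × Grass K V (n - k)} :
    p ∈ perpSet K V n k {(⟨S, hS⟩, ⟨U, hU⟩), (⟨S, hS⟩, ⟨U', hU'⟩)} ↔
      p.1.val = S ∧ (U ⊓ U' ≤ p.2.val ∨ p.2.val ≤ U ⊔ U') := by
  constructor
  · intro hp
    have h := hp _ (Set.mem_insert _ _)
    have h' := hp _ (Set.mem_insert_of_mem _ rfl)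
    have h1 : p.1 = ⟨S, hS⟩ := by
      by_contra hne
      have := (snd_eq_of_eq_or_prodAdj hne h).symm.trans (snd_eq_of_eq_or_prodAdj hne h')
      exact hUU'.ne congr(Subtype.val $this)
    rw [eq_or_prodAdj_iff_of_fst_eq h1] at h h'
    exact ⟨congr(Subtype.val $h1),
      (hUU'.eq_or_subAdj_and_eq_or_subAdj_iff (p.2.2.trans hU.symm)).1 ⟨h, h'⟩⟩
  · rintro ⟨h1, h2⟩ q (rfl | rfl) <;> rw [eq_or_prodAdj_iff_of_fst_eq (Subtype.ext h1)]
    exacts [((hUU'.eq_or_subAdj_and_eq_or_subAdj_iff (p.2.2.trans hU.symm)).2 h2).1,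
      ((hUU'.eq_or_subAdj_and_eq_or_subAdj_iff (p.2.2.trans hU.symm)).2 h2).2]

theorem mem_perpSet_perpSet_pair_iff {S U U' : Submodule K V} (hS : finrank K S = k)
    (hU : finrank K U = n - k) (hU' : finrank K U' = n - k) (hUU' : SubAdj K V U U')
    {p : Grass K V k × Grass K V (n - k)} :
    p ∈ perpSet K V n k (perpSet K V n k {(⟨S, hS⟩, ⟨U, hU⟩), (⟨S, hS⟩, ⟨U', hU'⟩)}) ↔
      p.1.val = S ∧ ∀ W : Submodule K V, finrank K W = n - k →
        (U ⊓ U' ≤ W ∨ W ≤ U ⊔ U') → p.2.val = W ∨ SubAdj K V p.2.val W := by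
  constructor
  · intro hp
    have hM := pair_subset_perpSet (n := n) (Or.inl ⟨rfl, hUU'⟩ :
      ProdAdj K V n k (⟨S, hS⟩, ⟨U, hU⟩) (⟨S, hS⟩, ⟨U', hU'⟩))
    obtain ⟨hp1, -⟩ := (mem_perpSet_pair_iff hS hU hU' hUU').1 (perpSet_anti hM hp)
    refine ⟨hp1, fun W hW hWM => ?_⟩
    have := hp (⟨S, hS⟩, ⟨W, hW⟩) ((mem_perpSet_pair_iff hS hU hU' hUU').2 ⟨rfl, hWM⟩)
    rwa [eq_or_prodAdj_iff_of_fst_eq (Subtype.ext hp1)] at this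
  · rintro ⟨hp1, h⟩ q hq
    obtain ⟨hq1, hq2⟩ := (mem_perpSet_pair_iff hS hU hU' hUU').1 hq
    rw [eq_or_prodAdj_iff_of_fst_eq (Subtype.ext (hp1.trans hq1.symm))]
    exact h _ q.2.2 hq2

end Perp

/-- For `1 < k < n - 1`, the double perp of `{(S,U), (S,U')}`, where `U ~ U'`,
is the line `{(S,Y) : U ⊓ U' ≤ Y ≤ U ⊔ U'}`. -/
theorem double_perp_eq_line
    {K V : Type*} [DivisionRing K] [AddCommGroup V] [Module K V]
    [FiniteDimensional K V] {n k : ℕ} (hV : finrank K V = n)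
    (hk1 : 1 < k) (hk2 : k < n - 1)
    (S : Submodule K V) (hS : finrank K S = k)
    (U U' : Submodule K V) (hU : finrank K U = n - k) (hU' : finrank K U' = n - k)
    (hUU' : SubAdj K V U U') :
    perpSet K V n k (perpSet K V n k
        {(⟨S, hS⟩, ⟨U, hU⟩), (⟨S, hS⟩, ⟨U', hU'⟩)}) =
      {p : Grass K V k × Grass K V (n - k) |
        p.1.val = S ∧ U ⊓ U' ≤ p.2.val ∧ p.2.val ≤ U ⊔ U'} := by
  ext p
  rw [mem_perpSet_perpSet_pair_iff hS hU hU' hUU']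
  exact and_congr_right' (hUU'.inf_le_and_le_sup_iff hU (by omega) (by omega) p.2.2).symm
end
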